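/- arXiv:2408.02333 — 7 statements merged into one kernel-verified Lean document; each statement's English description precedes it below -/
import Mathlib

section
/- Let p1 < p2 < ... < pk (k ≥ 1) be odd prime numbers and set ℓ0 = p1·p2···pk and m0 = ℓ0. Then the only pair (ℓ, m) in T satisfying the resonance equation m0²(ℓ+2)(ℓ−1)ℓ = (ℓ0+2)(ℓ0−1)ℓ0·m² is (ℓ, m) = (ℓ0, ℓ0). -/
/-- Let `p 0 < p 1 < ... < p (k-1)` (with `k ≥ 1`) be odd prime numbers, and set
`ℓ0 = p 0 * p 1 * ⋯ * p (k-1)` and `m0 = ℓ0`. Then the only pair `(ℓ, m)` in the set `T`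
(consisting of the pairs with `1 ≤ ℓ ≤ c0 = (ℓ0+2)(ℓ0−1)ℓ0/m0²`, `0 ≤ m ≤ ℓ`, `ℓ − m` even)
satisfying the resonance equation `m0²(ℓ+2)(ℓ−1)ℓ = (ℓ0+2)(ℓ0−1)ℓ0·m²` is `(ℓ, m) = (ℓ0, ℓ0)`.
(The condition `ℓ ≤ c0` is expressed equivalently as `ℓ·m0² ≤ (ℓ0+2)(ℓ0−1)ℓ0`.) -/
theorem stmt0 (k : ℕ) (hk : 1 ≤ k) (p : Fin k → ℕ)
    (hprime : ∀ i, Nat.Prime (p i)) (hodd : ∀ i, Odd (p i)) (hmono : StrictMono p)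
    (ℓ0 m0 : ℕ) (hℓ0 : ℓ0 = ∏ i, p i) (hm0 : m0 = ℓ0) :
    {q : ℕ × ℕ | 1 ≤ q.1 ∧ q.1 * m0 ^ 2 ≤ (ℓ0 + 2) * (ℓ0 - 1) * ℓ0 ∧ q.2 ≤ q.1 ∧
        Even (q.1 - q.2) ∧
        m0 ^ 2 * ((q.1 + 2) * (q.1 - 1) * q.1) = (ℓ0 + 2) * (ℓ0 - 1) * ℓ0 * q.2 ^ 2}
      = {(ℓ0, ℓ0)} := by
  rw [hm0]
  -- basic facts about ℓ0
  have hodd0 : Odd ℓ0 := by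
    rw [Nat.odd_iff, ← Nat.two_dvd_ne_zero, hℓ0]
    rw [Nat.prime_two.prime.dvd_finset_prod_iff]
    rintro ⟨i, -, h⟩
    exact (Nat.not_even_iff_odd.mpr (hodd i)) ((even_iff_two_dvd).mpr h)
  have hge3 : 3 ≤ ℓ0 := by
    have h0 : p ⟨0, hk⟩ ∣ ℓ0 := by
      rw [hℓ0]; exact Finset.dvd_prod_of_mem p (Finset.mem_univ _)
    have hp3 : 3 ≤ p ⟨0, hk⟩ := by
      have h2 := (hprime ⟨0, hk⟩).two_le
      obtain ⟨j, hj⟩ := hodd ⟨0, hk⟩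
      omega
    have hpos : 0 < ℓ0 := by
      rw [hℓ0]; exact Finset.prod_pos fun i _ => (hprime i).pos
    exact hp3.trans (Nat.le_of_dvd hpos h0)
  obtain ⟨n, hn⟩ : ∃ n, ℓ0 = n + 3 := ⟨ℓ0 - 3, by omega⟩
  -- ℓ0 divides m whenever ℓ0 ∣ m^2 (squarefreeness of ℓ0)
  have hsqf : ∀ m : ℕ, ℓ0 ∣ m ^ 2 → ℓ0 ∣ m := by
    intro m hdvd
    rw [hℓ0]
    have himg : (∏ i, p i) = ∏ q ∈ Finset.image p Finset.univ, q := by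
      rw [Finset.prod_image (fun a _ b _ h => hmono.injective h)]
    rw [himg]
    apply Finset.prod_primes_dvd
    · intro q hq
      obtain ⟨i, -, rfl⟩ := Finset.mem_image.mp hq
      exact (hprime i).prime
    · intro q hq
      obtain ⟨i, -, rfl⟩ := Finset.mem_image.mp hq
      have hpi : p i ∣ ℓ0 := by
        rw [hℓ0]; exact Finset.dvd_prod_of_mem p (Finset.mem_univ i)
      exact (hprime i).prime.dvd_of_dvd_pow (hpi.trans hdvd)
  -- coprimality of ℓ0 with (ℓ0+2)(ℓ0-1)
  have hcop : Nat.Coprime ℓ0 ((ℓ0 + 2) * (ℓ0 - 1)) := by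
    apply Nat.Coprime.mul_right
    · rw [show ℓ0 + 2 = 2 + ℓ0 from by ring, Nat.coprime_add_self_right]
      exact Nat.coprime_two_right.mpr hodd0
    · rw [show ℓ0 - 1 = n + 2 from by omega, hn,
        show n + 3 = 1 + (n + 2) from by ring, Nat.coprime_add_self_left]
      exact Nat.coprime_one_left _
  ext ⟨ℓ, m⟩
  simp only [Set.mem_setOf_eq, Set.mem_singleton_iff, Prod.mk.injEq]
  constructor
  · rintro ⟨h1, h2, h3, h4, h5⟩
    -- ℓ ≤ ℓ0
    have hle : ℓ ≤ ℓ0 := by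
      by_contra hc
      push_neg at hc
      rw [hn, show n + 3 - 1 = n + 2 from by omega] at h2
      nlinarith
    obtain ⟨a, ha⟩ : ∃ a, ℓ = a + 1 := ⟨ℓ - 1, by omega⟩
    have h5' : ℓ0 ^ 2 * ((a + 3) * a * (a + 1)) = (ℓ0 + 2) * (ℓ0 - 1) * ℓ0 * m ^ 2 := by
      rw [ha, Nat.add_sub_cancel, show a + 1 + 2 = a + 3 by omega] at h5; exact h5
    -- ℓ0 ∣ m^2 hence ℓ0 ∣ m
    have key : (ℓ0 + 2) * (ℓ0 - 1) * m ^ 2 = ℓ0 * ((a + 3) * a * (a + 1)) :=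
      Nat.eq_of_mul_eq_mul_left (show 0 < ℓ0 by omega) (by
        rw [show ℓ0 * ((ℓ0 + 2) * (ℓ0 - 1) * m ^ 2) = (ℓ0 + 2) * (ℓ0 - 1) * ℓ0 * m ^ 2
          from by ring, ← h5']
        ring)
    have hdvdm2 : ℓ0 ∣ m ^ 2 :=
      Nat.Coprime.dvd_of_dvd_mul_right hcop ⟨(a + 3) * a * (a + 1), by rw [← key]; ring⟩
    have hdvdm : ℓ0 ∣ m := hsqf m hdvdm2
    rcases Nat.eq_zero_or_pos m with hmz | hmpos
    · -- m = 0 forces ℓ = 1, contradicting parity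
      exfalso
      subst hmz
      have hz : ℓ0 ^ 2 * ((a + 3) * a * (a + 1)) = 0 := by rw [h5']; ring
      have hL0 : ℓ0 ^ 2 ≠ 0 := by positivity
      have hX : (a + 3) * a * (a + 1) = 0 := by
        rcases Nat.mul_eq_zero.mp hz with h | h
        · exact absurd h hL0
        · exact h
      have ha0 : a = 0 := by
        rcases Nat.mul_eq_zero.mp hX with h | h
        · rcases Nat.mul_eq_zero.mp h with h | h <;> omega
        · omega
      rw [ha, ha0] at h4
      norm_num at h4
    · have : ℓ0 ≤ m := Nat.le_of_dvd hmpos hdvdm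
      constructor <;> omega
  · rintro ⟨rfl, rfl⟩
    refine ⟨by omega, ?_, le_refl _, by simp, by ring⟩
    rw [hn, show n + 3 - 1 = n + 2 from by omega]
    nlinarith
end

section
/- Let ℓ0 ≥ 11 be a prime number and set m0 = ℓ0 − 2. Then the only pair (ℓ, m) in T satisfying the resonance equation m0²(ℓ+2)(ℓ−1)ℓ = (ℓ0+2)(ℓ0−1)ℓ0·m² is (ℓ, m) = (ℓ0, ℓ0 − 2). -/
/-!
Write `p = ℓ0`. The bound `ℓ·(p-2)² ≤ (p+2)(p-1)p` forces `ℓ ≤ p + 6 < 2p - 2`. The prime `p` does not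
divide `(p-2)²`, so it divides one of `ℓ + 2`, `ℓ - 1`, `ℓ`, which are below `2p`; hence `ℓ` is one of
`1, p - 2, p + 1, p`. For `ℓ = 1` the equation gives `m = 0`, against the parity condition, and for
`ℓ = p` it gives `m = p - 2`. The other two are excluded modulo `p + 2`, where `p ≡ -2`: the right side
vanishes while the left side is `16·(-2)(-5)(-4) = -640` resp. `16·1·(-2)(-1) = 32`, and the odd number
`p + 2 > 5` divides neither.
-/

theorem le_add_six_of_mul_sub_two_sq_le {p ℓ : ℕ} (hp : 11 ≤ p)
    (h : ℓ * (p - 2) ^ 2 ≤ (p + 2) * (p - 1) * p) : ℓ ≤ p + 6 := by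
  obtain ⟨k, rfl⟩ : ∃ k, p = k + 2 := ⟨p - 2, by omega⟩
  rw [Nat.add_sub_cancel, show k + 2 - 1 = k + 1 by omega] at h
  by_contra! hℓ
  nlinarith [Nat.mul_le_mul_right (k ^ 2) hℓ]

theorem Nat.Prime.dvd_of_dvd_sub_two_sq_mul {p a : ℕ} (hp : p.Prime) (h3 : 3 ≤ p)
    (h : p ∣ (p - 2) ^ 2 * a) : p ∣ a := by
  have hcop : p.Coprime (p - 2) :=
    hp.coprime_iff_not_dvd.2 (Nat.not_dvd_of_pos_of_lt (by omega) (by omega))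
  exact (hcop.pow_right 2).dvd_of_dvd_mul_left h

theorem eq_zero_or_eq_of_dvd_of_lt_two_mul {p a : ℕ} (h : p ∣ a) (ha : a < 2 * p) :
    a = 0 ∨ a = p :=
  (eq_or_ne a 0).imp_right fun ha0 => Nat.eq_of_dvd_of_lt_two_mul ha0 h ha

theorem Nat.Prime.cases_of_dvd_mul_sub_one_mul {p ℓ : ℕ} (hp : p.Prime) (hℓ : ℓ + 2 < 2 * p)
    (h : p ∣ (ℓ + 2) * (ℓ - 1) * ℓ) : ℓ ≤ 1 ∨ ℓ + 2 = p ∨ ℓ = p + 1 ∨ ℓ = p := by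
  rcases hp.dvd_mul.1 h with h | h
  · rcases hp.dvd_mul.1 h with h | h
    · have := eq_zero_or_eq_of_dvd_of_lt_two_mul h hℓ
      omega
    · have := eq_zero_or_eq_of_dvd_of_lt_two_mul h (by omega)
      omega
  · have := eq_zero_or_eq_of_dvd_of_lt_two_mul h (by omega)
    omega

theorem ZMod.natCast_eq_neg_of_modulus_add {a b : ℕ} : (a : ZMod (a + b)) = -b := by
  have := ZMod.natCast_self (a + b)
  push_cast at this
  linear_combination this

theorem Odd.le_of_dvd_two_pow_mul {q r k : ℕ} (hq : Odd q) (hr : 0 < r) (h : q ∣ 2 ^ k * r) :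
    q ≤ r :=
  Nat.le_of_dvd hr ((hq.coprime_two_right.pow_right k).dvd_of_dvd_mul_left h)

section Resonance

variable {p ℓ m : ℕ}

theorem not_resonance_of_add_two_eq (hp : Odd p) (h4 : 4 ≤ p) (hℓ : ℓ + 2 = p)
    (h : (p - 2) ^ 2 * ((ℓ + 2) * (ℓ - 1) * ℓ) = (p + 2) * (p - 1) * p * m ^ 2) : False := by
  subst hℓ
  obtain ⟨j, rfl⟩ : ∃ j, ℓ = j + 2 := ⟨ℓ - 2, by omega⟩
  have hdvd : j + 6 ∣ 2 ^ 7 * 5 := by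
    rw [← ZMod.natCast_eq_zero_iff]
    have := congrArg (Nat.cast : ℕ → ZMod (j + 6)) h
    push_cast [add_tsub_cancel_right, Nat.add_one_sub_one, ZMod.natCast_self] at this ⊢
    rw [ZMod.natCast_eq_neg_of_modulus_add] at this
    linear_combination -this
  have := (hp.add_even even_two).le_of_dvd_two_pow_mul (by norm_num) hdvd
  omega

theorem not_resonance_of_eq_add_one (hp : Odd p) (h2 : 2 ≤ p) (hℓ : ℓ = p + 1)
    (h : (p - 2) ^ 2 * ((ℓ + 2) * (ℓ - 1) * ℓ) = (p + 2) * (p - 1) * p * m ^ 2) : False := by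
  subst hℓ
  obtain ⟨j, rfl⟩ : ∃ j, p = j + 2 := ⟨p - 2, by omega⟩
  have hdvd : j + 4 ∣ 2 ^ 5 * 1 := by
    rw [← ZMod.natCast_eq_zero_iff]
    have := congrArg (Nat.cast : ℕ → ZMod (j + 4)) h
    push_cast [add_tsub_cancel_right, Nat.add_one_sub_one, ZMod.natCast_self] at this ⊢
    rw [ZMod.natCast_eq_neg_of_modulus_add] at this
    linear_combination this
  have := (hp.add_even even_two).le_of_dvd_two_pow_mul (by norm_num) hdvd
  omega

end Resonance

/-- Let `ℓ0 ≥ 11` be a prime number and set `m0 = ℓ0 − 2`. Then the only pair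
`(ℓ, m)` in the set `T` (consisting of the pairs with `1 ≤ ℓ ≤ c0 = (ℓ0+2)(ℓ0−1)ℓ0/m0²`,
`0 ≤ m ≤ ℓ`, `ℓ − m` even) satisfying the resonance equation
`m0²(ℓ+2)(ℓ−1)ℓ = (ℓ0+2)(ℓ0−1)ℓ0·m²` is `(ℓ, m) = (ℓ0, ℓ0 − 2)`.
(The condition `ℓ ≤ c0` is expressed equivalently as `ℓ·m0² ≤ (ℓ0+2)(ℓ0−1)ℓ0`.) -/
theorem stmt1 (ℓ0 : ℕ) (hprime : Nat.Prime ℓ0) (h11 : 11 ≤ ℓ0)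
    (m0 : ℕ) (hm0 : m0 = ℓ0 - 2) :
    {q : ℕ × ℕ | 1 ≤ q.1 ∧ q.1 * m0 ^ 2 ≤ (ℓ0 + 2) * (ℓ0 - 1) * ℓ0 ∧ q.2 ≤ q.1 ∧
        Even (q.1 - q.2) ∧
        m0 ^ 2 * ((q.1 + 2) * (q.1 - 1) * q.1) = (ℓ0 + 2) * (ℓ0 - 1) * ℓ0 * q.2 ^ 2}
      = {(ℓ0, ℓ0 - 2)} := by
  subst hm0
  have hodd : Odd ℓ0 := hprime.odd_of_ne_two (by omega)
  have hcubic : 0 < (ℓ0 + 2) * (ℓ0 - 1) * ℓ0 :=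
    Nat.mul_pos (Nat.mul_pos (by omega) (by omega)) (by omega)
  ext ⟨ℓ, m⟩
  simp only [Set.mem_ofPred_eq, Set.mem_singleton_iff, Prod.mk.injEq]
  constructor
  · rintro ⟨hℓ1, hbound, -, heven, hres⟩
    have hℓ := le_add_six_of_mul_sub_two_sq_le h11 hbound
    have hdvd : ℓ0 ∣ (ℓ + 2) * (ℓ - 1) * ℓ :=
      hprime.dvd_of_dvd_sub_two_sq_mul (by omega) ⟨(ℓ0 + 2) * (ℓ0 - 1) * m ^ 2, by rw [hres]; ring⟩
    rcases hprime.cases_of_dvd_mul_sub_one_mul (by omega) hdvd with hℓ | hℓ | hℓ | rfl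
    · obtain rfl : ℓ = 1 := by omega
      have : m = 0 := by simpa [hcubic.ne'] using hres.symm
      simp [this] at heven
    · exact (not_resonance_of_add_two_eq hodd (by omega) hℓ hres).elim
    · exact (not_resonance_of_eq_add_one hodd (by omega) hℓ hres).elim
    · refine ⟨rfl, Nat.pow_left_injective two_ne_zero ?_⟩
      exact (Nat.eq_of_mul_eq_mul_left hcubic (by rw [← hres]; ring)).symm
  · rintro ⟨rfl, rfl⟩
    refine ⟨by omega, ?_, Nat.sub_le _ _, ⟨1, by omega⟩, by ring⟩
    rw [mul_comm, sq]
    exact Nat.mul_le_mul_right _ (Nat.mul_le_mul (by omega) (by omega))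
end

section
/- Let p > 3 be a prime number and set ℓ0 = 2p and m0 = 2p. Then the only pair (ℓ, m) in T satisfying the resonance equation m0²(ℓ+2)(ℓ−1)ℓ = (ℓ0+2)(ℓ0−1)ℓ0·m² is (ℓ, m) = (2p, 2p). -/
/-!
Write `f ℓ = (ℓ + 2)(ℓ - 1)ℓ`. With `ℓ0 = m0 = 2p` the resonance equation reduces to
`p · f ℓ = (p + 1)(2p - 1) m²`, and the bound `ℓ ≤ c0` to `ℓ ≤ 2p`. Since `p` divides neither
`p + 1` nor `2p - 1`, it divides `m`, and `m ≤ ℓ ≤ 2p` leaves `m ∈ {0, p, 2p}`. For `m = 0` only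
`ℓ = 1` solves the equation, of the wrong parity; for `m = 2p` we get `ℓ = 2p`. For `m = p` the prime
`p` divides `f ℓ` with `p ≤ ℓ ≤ 2p`, so `ℓ ∈ {2p - 2, p + 1, p, 2p}`: all but `ℓ = p` have the wrong
parity, and `ℓ = p` fails the equation.
-/

lemma resonance_two_mul_iff {p X m : ℕ} (hp : 0 < p) :
    (2 * p) ^ 2 * X = (2 * p + 2) * (2 * p - 1) * (2 * p) * m ^ 2 ↔
      p * X = (p + 1) * (2 * p - 1) * m ^ 2 := by
  have hlhs : (2 * p) ^ 2 * X = 4 * p * (p * X) := by ring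
  have hrhs : (2 * p + 2) * (2 * p - 1) * (2 * p) * m ^ 2 =
      4 * p * ((p + 1) * (2 * p - 1) * m ^ 2) := by ring
  rw [hlhs, hrhs]
  exact Nat.mul_left_cancel_iff (by positivity)

lemma le_two_mul_of_mul_sq_le {p ℓ : ℕ} (hp : 0 < p)
    (h : ℓ * (2 * p) ^ 2 ≤ (2 * p + 2) * (2 * p - 1) * (2 * p)) : ℓ ≤ 2 * p := by
  obtain ⟨q, rfl⟩ : ∃ q, p = q + 1 := ⟨p - 1, by omega⟩
  rw [show 2 * (q + 1) - 1 = 2 * q + 1 by omega] at h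
  nlinarith

lemma Nat.Prime.dvd_of_mul_eq_mul_sq {p a X m : ℕ} (hp : p.Prime) (ha : ¬ p ∣ a)
    (h : p * X = a * m ^ 2) : p ∣ m := by
  have hdvd : p ∣ a * m ^ 2 := ⟨X, h.symm⟩
  exact hp.dvd_of_dvd_pow ((hp.dvd_mul.mp hdvd).resolve_left ha)

lemma Nat.Prime.not_dvd_succ_mul_two_mul_sub_one {p : ℕ} (hp : p.Prime) :
    ¬ p ∣ (p + 1) * (2 * p - 1) := by
  have hsucc : ¬ p ∣ p + 1 := fun h => hp.not_dvd_one ((Nat.dvd_add_right dvd_rfl).mp h)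
  have hpred : ¬ p ∣ 2 * p - 1 := fun h => hp.not_dvd_one <| (Nat.dvd_add_right h).mp <| by
    rw [Nat.sub_add_cancel (by linarith [hp.pos])]
    exact dvd_mul_left p 2
  rw [hp.dvd_mul]
  tauto

lemma eq_succ_mul_of_dvd {p n k : ℕ} (h : p ∣ n) (hlo : k * p < n) (hhi : n < (k + 2) * p) :
    n = (k + 1) * p := by
  obtain ⟨t, rfl⟩ := h
  have hk : k < t := Nat.lt_of_mul_lt_mul_right (by rwa [mul_comm p t] at hlo)
  have ht : t < k + 2 := Nat.lt_of_mul_lt_mul_right (by rwa [mul_comm p t] at hhi)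
  rw [show t = k + 1 by omega, mul_comm]

lemma Nat.Prime.cubic_ne_of_le_two_mul {p ℓ : ℕ} (hp : p.Prime) (hodd : Odd p)
    (hlo : p ≤ ℓ) (hhi : ℓ ≤ 2 * p) (hpar : Even (ℓ - p)) :
    (ℓ + 2) * (ℓ - 1) * ℓ ≠ (p + 1) * (2 * p - 1) * p := by
  intro h
  have := hp.two_le
  obtain ⟨s, hs⟩ := hodd
  obtain ⟨r, hr⟩ := hpar
  have hdvd : p ∣ (ℓ + 2) * (ℓ - 1) * ℓ := h ▸ dvd_mul_left p _
  rcases hp.dvd_mul.mp hdvd with hdvd | hℓ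
  · rcases hp.dvd_mul.mp hdvd with hℓ2 | hℓ1
    · have := eq_succ_mul_of_dvd hℓ2 (k := 1) (by omega) (by omega)
      omega
    · have := eq_succ_mul_of_dvd hℓ1 (k := 0) (by omega) (by omega)
      omega
  · have hℓp : ℓ = p := by
      have := eq_succ_mul_of_dvd hℓ (k := 0) (by omega) (by omega)
      omega
    subst hℓp
    have hcancel : (ℓ + 2) * (ℓ - 1) = (ℓ + 1) * (2 * ℓ - 1) :=
      Nat.eq_of_mul_eq_mul_right (by omega) h
    obtain ⟨q, rfl⟩ : ∃ q, ℓ = q + 3 := ⟨ℓ - 3, by omega⟩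
    rw [show q + 3 - 1 = q + 2 by omega, show 2 * (q + 3) - 1 = 2 * q + 5 by omega] at hcancel
    nlinarith

lemma Nat.Prime.eq_of_resonance {p ℓ m : ℕ} (hp : p.Prime) (hodd : Odd p) (hℓ : 1 ≤ ℓ)
    (hc0 : ℓ ≤ 2 * p) (hmℓ : m ≤ ℓ) (hpar : Even (ℓ - m))
    (hres : p * ((ℓ + 2) * (ℓ - 1) * ℓ) = (p + 1) * (2 * p - 1) * m ^ 2) :
    ℓ = 2 * p ∧ m = 2 * p := by
  obtain ⟨k, rfl⟩ := hp.dvd_of_mul_eq_mul_sq hp.not_dvd_succ_mul_two_mul_sub_one hres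
  have hk : k ≤ 2 := by
    by_contra! hk
    nlinarith [hp.pos]
  interval_cases k
  · have hcubic : (ℓ + 2) * (ℓ - 1) * ℓ = 0 := by simpa [hp.ne_zero] using hres
    simp only [mul_eq_zero] at hcubic
    obtain ⟨r, hr⟩ := hpar
    omega
  · refine absurd ?_ (hp.cubic_ne_of_le_two_mul hodd (by omega) hc0 (by simpa using hpar))
    apply Nat.eq_of_mul_eq_mul_left hp.pos
    rw [hres]
    ring
  · omega

/-- Let `p > 3` be a prime number and set `ℓ0 = 2p` and `m0 = 2p`. Then the only
pair `(ℓ, m)` in the set `T` (consisting of the pairs with `1 ≤ ℓ ≤ c0 = (ℓ0+2)(ℓ0−1)ℓ0/m0²`,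
`0 ≤ m ≤ ℓ`, `ℓ − m` even) satisfying the resonance equation
`m0²(ℓ+2)(ℓ−1)ℓ = (ℓ0+2)(ℓ0−1)ℓ0·m²` is `(ℓ, m) = (2p, 2p)`.
(The condition `ℓ ≤ c0` is expressed equivalently as `ℓ·m0² ≤ (ℓ0+2)(ℓ0−1)ℓ0`.) -/
theorem stmt2 (p : ℕ) (hp : Nat.Prime p) (h3 : 3 < p)
    (ℓ0 m0 : ℕ) (hℓ0 : ℓ0 = 2 * p) (hm0 : m0 = 2 * p) :
    {q : ℕ × ℕ | 1 ≤ q.1 ∧ q.1 * m0 ^ 2 ≤ (ℓ0 + 2) * (ℓ0 - 1) * ℓ0 ∧ q.2 ≤ q.1 ∧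
        Even (q.1 - q.2) ∧
        m0 ^ 2 * ((q.1 + 2) * (q.1 - 1) * q.1) = (ℓ0 + 2) * (ℓ0 - 1) * ℓ0 * q.2 ^ 2}
      = {(2 * p, 2 * p)} := by
  subst hℓ0 hm0
  ext ⟨ℓ, m⟩
  simp only [Set.mem_ofPred_eq, Set.mem_singleton_iff, Prod.mk.injEq]
  constructor
  · rintro ⟨hℓ, hc0, hmℓ, hpar, hres⟩
    exact hp.eq_of_resonance (hp.odd_of_ne_two (by omega)) hℓ (le_two_mul_of_mul_sq_le hp.pos hc0)
      hmℓ hpar ((resonance_two_mul_iff hp.pos).mp hres)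
  · rintro ⟨rfl, rfl⟩
    refine ⟨by omega, ?_, le_rfl, by simp, by ring⟩
    calc 2 * p * (2 * p) ^ 2 = (2 * p * (2 * p)) * (2 * p) := by ring
      _ ≤ (2 * p + 2) * (2 * p - 1) * (2 * p) := by
        apply Nat.mul_le_mul_right
        obtain ⟨q, rfl⟩ : ∃ q, p = q + 1 := ⟨p - 1, by omega⟩
        rw [show 2 * (q + 1) - 1 = 2 * q + 1 by omega]
        nlinarith
end

section
/- Let n ≥ 2 and let M be a real orthogonal n×n matrix (M·Mᵀ = I). Write M in block form as (A b; c d), where A is the (n−1)×(n−1) upper-left block, b ∈ ℝ^{n−1} consists of the first n−1 entries of the last column, c ∈ ℝ^{n−1} consists of the first n−1 entries of the last row, and d ∈ ℝ is the (n,n) entry. Then: (a) |b| = |c| (Euclidean norms); (b) for every z ∈ ℝ^{n−1}, |(d·A − b⊗c)z| ≥ |d|·|z|, where b⊗c is the matrix with entries bᵢcⱼ; (c) d·det(d·A − b⊗c) = d^{n−1}·det M; in particular, if d ≠ 0 then the matrix d·A − b⊗c is invertible. -/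
/-!
Write `M = (A b; c d)` as a bordered matrix. Right multiplication by `E = (d • 1, 0; -c, 1)`
clears the last row: `M * E = (d • A - b ⊗ c, b; 0, d)`. Taking determinants gives
`d * det (d • A - b ⊗ c) = dⁿ * det M` over any commutative ring. Applying `M * E` to `(z, 0)`
and using that an orthogonal `M` preserves dot products gives
`|(d • A - b ⊗ c) z|² = d² |z|² + (c ⬝ z)²`. Finally the last row and the last column of an
orthogonal matrix both have norm one, so `|b|² = 1 - d² = |c|²`.
-/

namespace Matrix

variable {α m : Type*}

def bordered (A : Matrix m m α) (b c : m → α) (d : α) : Matrix (m ⊕ Fin 1) (m ⊕ Fin 1) α :=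
  fromBlocks A (replicateCol (Fin 1) b) (replicateRow (Fin 1) c) (of fun _ _ => d)

theorem submatrix_finSumFinEquiv_eq_bordered {n : ℕ} {M : Matrix (Fin (n + 1)) (Fin (n + 1)) α}
    {A : Matrix (Fin n) (Fin n) α} {b c : Fin n → α} {d : α}
    (hA : ∀ i j, A i j = M i.castSucc j.castSucc) (hb : ∀ i, b i = M i.castSucc (Fin.last n))
    (hc : ∀ j, c j = M (Fin.last n) j.castSucc) (hd : d = M (Fin.last n) (Fin.last n)) :
    M.submatrix finSumFinEquiv finSumFinEquiv = bordered A b c d := by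
  ext (i | i) (j | j) <;> simp [bordered, Fin.fin_one_eq_zero, hA, hb, hc, hd] <;> rfl

section

variable {R : Type*} [CommRing R] [Fintype m] [DecidableEq m]

theorem bordered_mul_fromBlocks (A : Matrix m m R) (b c : m → R) (d : R) :
    bordered A b c d * fromBlocks (d • 1) 0 (-replicateRow (Fin 1) c) 1 =
      fromBlocks (d • A - vecMulVec b c) (replicateCol (Fin 1) b) 0 (of fun _ _ => d) := by
  rw [bordered, fromBlocks_multiply]
  congr 1 <;> ext <;> simp [mul_apply, vecMulVec_apply, sub_eq_add_neg]

theorem det_smul_sub_vecMulVec (A : Matrix m m R) (b c : m → R) (d : R) :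
    d * (d • A - vecMulVec b c).det = d ^ Fintype.card m * (bordered A b c d).det := by
  have h := congrArg det (bordered_mul_fromBlocks A b c d)
  rw [det_mul, det_fromBlocks_zero₂₁, det_fromBlocks_zero₁₂] at h
  simp only [det_smul_of_tower, det_one, smul_eq_mul, mul_one, det_unique, of_apply,
    one_apply_eq] at h
  linear_combination -h

theorem dotProduct_mulVec_self_of_transpose_mul_self_eq_one {M : Matrix m m R}
    (h : Mᵀ * M = 1) (v : m → R) : M *ᵥ v ⬝ᵥ M *ᵥ v = v ⬝ᵥ v := by
  rw [dotProduct_mulVec, ← mulVec_transpose, mulVec_mulVec, h, one_mulVec]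

theorem dotProduct_self_eq_of_bordered_mul_transpose_eq_one {A : Matrix m m R} {b c : m → R}
    {d : R} (h : bordered A b c d * (bordered A b c d)ᵀ = 1) : b ⬝ᵥ b = c ⬝ᵥ c := by
  have hrow := congrFun (congrFun h (Sum.inr 0)) (Sum.inr 0)
  have h' : (bordered A b c d)ᵀ * bordered A b c d = 1 := mul_eq_one_comm.mp h
  have hcol := congrFun (congrFun h' (Sum.inr 0)) (Sum.inr 0)
  simp only [bordered, mul_apply, transpose_apply, Fintype.sum_sum_type, fromBlocks_apply₂₁,
    fromBlocks_apply₁₂, fromBlocks_apply₂₂, replicateRow_apply, replicateCol_apply, of_apply,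
    Finset.univ_unique, Finset.sum_singleton, one_apply_eq] at hrow hcol
  simp only [dotProduct]
  linear_combination hcol - hrow

theorem dotProduct_self_mulVec_smul_sub_vecMulVec {A : Matrix m m R} {b c : m → R} {d : R}
    (h : (bordered A b c d)ᵀ * bordered A b c d = 1) (z : m → R) :
    (d • A - vecMulVec b c) *ᵥ z ⬝ᵥ (d • A - vecMulVec b c) *ᵥ z =
      d ^ 2 * (z ⬝ᵥ z) + (c ⬝ᵥ z) ^ 2 := by
  set E : Matrix (m ⊕ Fin 1) (m ⊕ Fin 1) R := fromBlocks (d • 1) 0 (-replicateRow (Fin 1) c) 1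
  have hEz : E *ᵥ Sum.elim z 0 = Sum.elim (d • z) (fun _ => -(c ⬝ᵥ z)) := by
    ext (i | i) <;>
      simp [E, fromBlocks_mulVec, smul_mulVec, neg_mulVec, replicateRow_mulVec_eq_const]
  have hMEz : bordered A b c d *ᵥ (E *ᵥ Sum.elim z 0) =
      Sum.elim ((d • A - vecMulVec b c) *ᵥ z) 0 := by
    rw [mulVec_mulVec, bordered_mul_fromBlocks, fromBlocks_mulVec]
    simp
  calc (d • A - vecMulVec b c) *ᵥ z ⬝ᵥ (d • A - vecMulVec b c) *ᵥ z
      = Sum.elim ((d • A - vecMulVec b c) *ᵥ z) (0 : Fin 1 → R) ⬝ᵥ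
          Sum.elim ((d • A - vecMulVec b c) *ᵥ z) (0 : Fin 1 → R) := by
        rw [sumElim_dotProduct_sumElim, dotProduct_zero, add_zero]
    _ = E *ᵥ Sum.elim z 0 ⬝ᵥ E *ᵥ Sum.elim z 0 := by
        rw [← hMEz, dotProduct_mulVec_self_of_transpose_mul_self_eq_one h]
    _ = d ^ 2 * (z ⬝ᵥ z) + (c ⬝ᵥ z) ^ 2 := by
        rw [hEz, sumElim_dotProduct_sumElim, smul_dotProduct, dotProduct_smul]
        simp only [dotProduct, smul_eq_mul, Finset.univ_unique, Finset.sum_singleton]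
        ring

end

end Matrix

open Matrix

theorem stmt6_general (n : ℕ)
    (M : Matrix (Fin (n + 1)) (Fin (n + 1)) ℝ) (hM : M * M.transpose = 1)
    (A : Matrix (Fin n) (Fin n) ℝ) (hA : ∀ i j, A i j = M i.castSucc j.castSucc)
    (b c : Fin n → ℝ)
    (hb : ∀ i, b i = M i.castSucc (Fin.last n))
    (hc : ∀ j, c j = M (Fin.last n) j.castSucc)
    (d : ℝ) (hd : d = M (Fin.last n) (Fin.last n)) :
    Real.sqrt (∑ i, b i ^ 2) = Real.sqrt (∑ j, c j ^ 2)
    ∧ (∀ z : Fin n → ℝ,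
        |d| * Real.sqrt (∑ i, z i ^ 2)
          ≤ Real.sqrt (∑ i, ((d • A - Matrix.vecMulVec b c).mulVec z) i ^ 2))
    ∧ d * (d • A - Matrix.vecMulVec b c).det = d ^ n * M.det
    ∧ (d ≠ 0 → IsUnit (d • A - Matrix.vecMulVec b c)) := by
  have hB := submatrix_finSumFinEquiv_eq_bordered hA hb hc hd
  have hB_orth : bordered A b c d * (bordered A b c d)ᵀ = 1 := by
    rw [← hB, transpose_submatrix, submatrix_mul_equiv, hM, submatrix_one_equiv]
  have hdet : d * (d • A - vecMulVec b c).det = d ^ n * M.det := by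
    rw [det_smul_sub_vecMulVec, Fintype.card_fin, ← hB, det_submatrix_equiv_self]
  have sum_sq_eq (v : Fin n → ℝ) : ∑ i, v i ^ 2 = v ⬝ᵥ v := by simp only [dotProduct, sq]
  refine ⟨?_, fun z => ?_, hdet, fun hd0 => ?_⟩
  · rw [sum_sq_eq, sum_sq_eq, dotProduct_self_eq_of_bordered_mul_transpose_eq_one hB_orth]
  · rw [← Real.sqrt_sq_eq_abs, ← Real.sqrt_mul (sq_nonneg d), sum_sq_eq, sum_sq_eq,
      dotProduct_self_mulVec_smul_sub_vecMulVec (mul_eq_one_comm.mp hB_orth)]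
    exact Real.sqrt_le_sqrt (le_add_of_nonneg_right (sq_nonneg _))
  · have hunit : IsUnit (d * (d • A - vecMulVec b c).det) :=
      hdet ▸ (hd0.isUnit.pow n).mul (isUnit_det_of_right_inverse hM)
    exact (isUnit_iff_isUnit_det _).mpr (isUnit_of_mul_isUnit_right hunit)

/-- Let `n ≥ 2` (here the full size is `n + 1` with `n ≥ 1`) and let `M` be a
real orthogonal matrix (`M * Mᵀ = 1`). Write `M` in block form `(A b; c d)` where `A` is the
upper-left `n × n` block, `b` the first `n` entries of the last column, `c` the first `n`
entries of the last row, and `d` the bottom-right entry. Then: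
(a) `|b| = |c|` (Euclidean norms);
(b) for every `z ∈ ℝⁿ`, `|(d·A − b⊗c)z| ≥ |d|·|z|`;
(c) `d·det(d·A − b⊗c) = dⁿ·det M`; in particular, if `d ≠ 0` then `d·A − b⊗c` is invertible. -/
theorem stmt6 (n : ℕ) (hn : 1 ≤ n)
    (M : Matrix (Fin (n + 1)) (Fin (n + 1)) ℝ) (hM : M * M.transpose = 1)
    (A : Matrix (Fin n) (Fin n) ℝ) (hA : ∀ i j, A i j = M i.castSucc j.castSucc)
    (b c : Fin n → ℝ)
    (hb : ∀ i, b i = M i.castSucc (Fin.last n))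
    (hc : ∀ j, c j = M (Fin.last n) j.castSucc)
    (d : ℝ) (hd : d = M (Fin.last n) (Fin.last n)) :
    Real.sqrt (∑ i, b i ^ 2) = Real.sqrt (∑ j, c j ^ 2)
    ∧ (∀ z : Fin n → ℝ,
        |d| * Real.sqrt (∑ i, z i ^ 2)
          ≤ Real.sqrt (∑ i, ((d • A - Matrix.vecMulVec b c).mulVec z) i ^ 2))
    ∧ d * (d • A - Matrix.vecMulVec b c).det = d ^ n * M.det
    ∧ (d ≠ 0 → IsUnit (d • A - Matrix.vecMulVec b c)) :=
  stmt6_general n M hM A hA b c hb hc d hd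
end

section
/- Let n ≥ 2, write points of ℝⁿ as x = (x', xₙ) with x' ∈ ℝ^{n−1}, define 𝚏(x) = (−x'/xₙ, 1 − |x|) for xₙ < 0 and 𝚐(y) = (1 − yₙ)(1 + |y'|²)^{−1/2}·(y', −1) for yₙ < 1. Let Q be a real orthogonal n×n matrix and let y = (y', yₙ) with yₙ < 1 and [Q(y',−1)]ₙ < 0 (the last coordinate of Q applied to the vector (y',−1)). Then the last coordinate of Q·𝚐(y) is negative, and 𝚏(Q·𝚐(y)) = (T(y'), yₙ), where T(y') = −[Q(y',−1)]'/[Q(y',−1)]ₙ. In particular the transition map 𝚏∘Q∘𝚐 does not move the last coordinate yₙ, and acts on y' through a map independent of yₙ. -/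
/-- With `𝚏(x) = (−x'/xₙ, 1 − |x|)` (for `xₙ < 0`) and
`𝚐(y) = (1 − yₙ)(1 + |y'|²)^{−1/2}·(y', −1)` (for `yₙ < 1`) as in Statement 8, let `Q` be a real
orthogonal `(n+1) × (n+1)` matrix and let `y = (y', yₙ)` with `yₙ < 1` and `[Q(y',−1)]ₙ < 0`.
Then the last coordinate of `Q·𝚐(y)` is negative, and `𝚏(Q·𝚐(y)) = (T(y'), yₙ)` where
`T(y') = −[Q(y',−1)]'/[Q(y',−1)]ₙ`; in particular the transition map `𝚏∘Q∘𝚐` does not move the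
last coordinate `yₙ` and acts on `y'` through a map independent of `yₙ`. -/
theorem stmt9 (n : ℕ) (hn : 1 ≤ n)
    (f g : (Fin (n + 1) → ℝ) → (Fin (n + 1) → ℝ))
    (hf : ∀ x : Fin (n + 1) → ℝ, x (Fin.last n) < 0 →
      f x = Fin.snoc (fun i : Fin n => -(x i.castSucc) / x (Fin.last n))
        (1 - Real.sqrt (∑ i, x i ^ 2)))
    (hg : ∀ y : Fin (n + 1) → ℝ, y (Fin.last n) < 1 →
      g y = Fin.snoc
        (fun i : Fin n =>
          (1 - y (Fin.last n)) / Real.sqrt (1 + ∑ j : Fin n, y j.castSucc ^ 2) * y i.castSucc)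
        (-((1 - y (Fin.last n)) / Real.sqrt (1 + ∑ j : Fin n, y j.castSucc ^ 2))))
    (Q : Matrix (Fin (n + 1)) (Fin (n + 1)) ℝ) (hQ : Q * Q.transpose = 1)
    (y : Fin (n + 1) → ℝ) (hy : y (Fin.last n) < 1)
    (hQy : (Q.mulVec (Fin.snoc (fun j : Fin n => y j.castSucc) (-1))) (Fin.last n) < 0) :
    (Q.mulVec (g y)) (Fin.last n) < 0
    ∧ f (Q.mulVec (g y))
        = Fin.snoc
          (fun i : Fin n =>
            -((Q.mulVec (Fin.snoc (fun j : Fin n => y j.castSucc) (-1))) i.castSucc)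
              / ((Q.mulVec (Fin.snoc (fun j : Fin n => y j.castSucc) (-1))) (Fin.last n)))
          (y (Fin.last n)) := by
  set v : Fin (n + 1) → ℝ := Fin.snoc (fun j : Fin n => y j.castSucc) (-1) with hv
  set s : ℝ := Real.sqrt (1 + ∑ j : Fin n, y j.castSucc ^ 2) with hs
  have hsum_nonneg : (0:ℝ) < 1 + ∑ j : Fin n, y j.castSucc ^ 2 := by positivity
  have hs_pos : 0 < s := Real.sqrt_pos.mpr hsum_nonneg
  set c : ℝ := (1 - y (Fin.last n)) / s with hc
  have hc_pos : 0 < c := div_pos (by linarith) hs_pos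
  have hgy : g y = c • v := by
    rw [hg y hy]
    funext i
    refine Fin.lastCases ?_ ?_ i
    · simp [hv, Fin.snoc_last, hc, hs, mul_comm]
    · intro j
      simp [hv, Fin.snoc_castSucc, hc, hs]
  have hQgy : Q.mulVec (g y) = c • Q.mulVec v := by
    rw [hgy, Matrix.mulVec_smul]
  have hlast : (Q.mulVec (g y)) (Fin.last n) < 0 := by
    rw [hQgy]
    exact mul_neg_of_pos_of_neg hc_pos hQy
  refine ⟨hlast, ?_⟩
  -- orthogonality: norms preserved
  have hQ' : Q.transpose * Q = 1 := mul_eq_one_comm.mp hQ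
  have hnorm : ∑ i, (Q.mulVec v) i ^ 2 = ∑ i, v i ^ 2 := by
    have h1 : ∀ w : Fin (n+1) → ℝ, ∑ i, w i ^ 2 = dotProduct w w := by
      intro w; simp [dotProduct, sq]
    rw [h1, h1]
    calc dotProduct (Q.mulVec v) (Q.mulVec v)
        = dotProduct (Matrix.vecMul (Q.mulVec v) Q) v :=
          Matrix.dotProduct_mulVec _ _ _
      _ = dotProduct (Matrix.vecMul (Matrix.vecMul v Q.transpose) Q) v := by
          rw [← Matrix.vecMul_transpose]
      _ = dotProduct (Matrix.vecMul v (Q.transpose * Q)) v := by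
          rw [Matrix.vecMul_vecMul]
      _ = dotProduct v v := by rw [hQ', Matrix.vecMul_one]
  have hvv : ∑ i, v i ^ 2 = 1 + ∑ j : Fin n, y j.castSucc ^ 2 := by
    rw [Fin.sum_univ_castSucc]
    simp [hv, Fin.snoc_last, Fin.snoc_castSucc]
    ring
  rw [hf _ hlast]
  funext i
  refine Fin.lastCases ?_ ?_ i
  · simp only [Fin.snoc_last]
    have : ∑ i, (Q.mulVec (g y)) i ^ 2 = c ^ 2 * (1 + ∑ j : Fin n, y j.castSucc ^ 2) := by
      rw [hQgy]
      simp only [Pi.smul_apply, smul_eq_mul, mul_pow]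
      rw [← Finset.mul_sum, hnorm, hvv]
    rw [this, Real.sqrt_mul (sq_nonneg c), Real.sqrt_sq hc_pos.le, ← hs, hc,
      div_mul_cancel₀ _ hs_pos.ne']
    ring
  · intro j
    simp only [Fin.snoc_castSucc]
    rw [hQgy]
    simp only [Pi.smul_apply, smul_eq_mul]
    rw [← mul_neg, mul_div_mul_left _ _ hc_pos.ne']
end

section
/- Let U ⊆ ℝ³ ∖ {0} be open. Let P₀ : U → M₃(ℝ) be a smooth matrix-valued function each of whose entries p satisfies ⟨x, ∇p(x)⟩ = 0 on U (i.e., D_x P₀ = 0). Let f₀ : U → ℝ be smooth with div(P₀∇f₀) = 0 on U, and let α : U → ℝ be smooth. Define the radial derivative D_x f₀(x) = ⟨x, ∇f₀(x)⟩ and the matrix P̃(x) = (P₀(x)∇α(x))⊗x + x⊗(P₀(x)ᵀ∇α(x)) − (α(x) + ⟨x, ∇α(x)⟩)·P₀(x), where u⊗v is the matrix (uᵢvⱼ). Then div(P₀ ∇(α·D_x f₀)) = div(P̃ ∇f₀) on U. -/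
/-- The gradient `∇u(x)` of a scalar function on `ℝ³`, as the vector of partial derivatives. -/
noncomputable def grad3 (u : (Fin 3 → ℝ) → ℝ) (x : Fin 3 → ℝ) : Fin 3 → ℝ :=
  fun i => fderiv ℝ u x (Pi.single i 1)

/-- The divergence `div F(x) = Σᵢ ∂Fᵢ/∂xᵢ(x)` of a vector field on `ℝ³`. -/
noncomputable def div3 (F : (Fin 3 → ℝ) → (Fin 3 → ℝ)) (x : Fin 3 → ℝ) : ℝ :=
  ∑ i, fderiv ℝ F x (Pi.single i 1) i

/-- The radial derivative `D_x u(x) = ⟨x, ∇u(x)⟩` of a scalar function on `ℝ³`. -/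
noncomputable def radDer3 (u : (Fin 3 → ℝ) → ℝ) (x : Fin 3 → ℝ) : ℝ :=
  ∑ i, x i * grad3 u x i


open Filter

namespace Stmt13

abbrev E3 := Fin 3 → ℝ

noncomputable def e (i : Fin 3) : E3 := Pi.single i 1

lemma basis_expand (x : E3) : x = ∑ i, x i • e i := by
  funext j
  simp [e, Pi.single_apply, Finset.sum_apply]

lemma clm_expand (L : E3 →L[ℝ] ℝ) (x : E3) : L x = ∑ i, x i * L (e i) := by
  conv_lhs => rw [basis_expand x]
  rw [map_sum]
  simp

variable {U : Set E3} {u c d : E3 → ℝ} {x : E3}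

-- smoothness exponent we work with
notation "SM" => ((⊤ : ℕ∞) : WithTop ℕ∞)

lemma sm_fderiv_clm (hU : IsOpen U) (hu : ContDiffOn ℝ SM u U) :
    ContDiffOn ℝ SM (fderiv ℝ u) U :=
  hu.fderiv_of_isOpen hU (by exact_mod_cast le_top)

lemma sm_deriv (hU : IsOpen U) (hu : ContDiffOn ℝ SM u U) (v : E3) :
    ContDiffOn ℝ SM (fun y => fderiv ℝ u y v) U :=
  (sm_fderiv_clm hU hu).clm_apply contDiffOn_const

lemma sm_rad (hU : IsOpen U) (hu : ContDiffOn ℝ SM u U) :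
    ContDiffOn ℝ SM (fun y => fderiv ℝ u y y) U :=
  (sm_fderiv_clm hU hu).clm_apply contDiffOn_id

lemma sm_coord (j : Fin 3) : ContDiffOn ℝ SM (fun y : E3 => y j) U :=
  ((ContinuousLinearMap.proj j : E3 →L[ℝ] ℝ).contDiff).contDiffOn

lemma diffAt (hU : IsOpen U) (hu : ContDiffOn ℝ SM u U) (hx : x ∈ U) :
    DifferentiableAt ℝ u x :=
  (hu.contDiffAt (hU.mem_nhds hx)).differentiableAt (by simp)

lemma diffAt_fderiv_clm (hU : IsOpen U) (hu : ContDiffOn ℝ SM u U) (hx : x ∈ U) :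
    DifferentiableAt ℝ (fderiv ℝ u) x :=
  ((sm_fderiv_clm hU hu).contDiffAt (hU.mem_nhds hx)).differentiableAt
    (by simp)

lemma fdm (hc : DifferentiableAt ℝ c x) (hd : DifferentiableAt ℝ d x) (w : E3) :
    fderiv ℝ (fun y => c y * d y) x w = c x * fderiv ℝ d x w + d x * fderiv ℝ c x w := by
  rw [fderiv_fun_mul hc hd]; simp

lemma fds {F : Fin 3 → E3 → ℝ} (h : ∀ j, DifferentiableAt ℝ (F j) x) (w : E3) :
    fderiv ℝ (fun y => ∑ j, F j y) x w = ∑ j, fderiv ℝ (F j) x w := by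
  rw [fderiv_fun_sum (fun j _ => h j)]; simp

lemma fdcoord (j : Fin 3) (w : E3) : fderiv ℝ (fun y : E3 => y j) x w = w j := by
  have : fderiv ℝ (fun y : E3 => y j) x = (ContinuousLinearMap.proj j : E3 →L[ℝ] ℝ) :=
    (ContinuousLinearMap.proj j : E3 →L[ℝ] ℝ).fderiv
  rw [this]; rfl

lemma fd_apply {c : E3 → E3 →L[ℝ] ℝ} (hc : DifferentiableAt ℝ c x) (v w : E3) :
    fderiv ℝ (fun y => c y v) x w = (fderiv ℝ c x w) v := by
  rw [(hc.hasFDerivAt.clm_apply (hasFDerivAt_const v x)).fderiv]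
  simp

lemma fd_self {c : E3 → E3 →L[ℝ] ℝ} (hc : DifferentiableAt ℝ c x) (w : E3) :
    fderiv ℝ (fun y => c y y) x w = (fderiv ℝ c x w) x + c x w := by
  have h : HasFDerivAt (fun y => c y y)
      ((c x).comp (ContinuousLinearMap.id ℝ E3)
        + (fderiv ℝ c x).flip x) x := hc.hasFDerivAt.clm_apply (hasFDerivAt_id x)
  rw [h.fderiv]
  simp [add_comm]

lemma sym_all (hU : IsOpen U) (hu : ContDiffOn ℝ SM u U) (hx : x ∈ U) (v w : E3) :
    fderiv ℝ (fun y => fderiv ℝ u y v) x w = fderiv ℝ (fun y => fderiv ℝ u y w) x v := by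
  have hd := diffAt_fderiv_clm hU hu hx
  rw [fd_apply hd, fd_apply hd]
  exact ((hu.contDiffAt (hU.mem_nhds hx)).isSymmSndFDerivAt (by rw [minSmoothness_of_isRCLikeNormedField]; exact WithTop.coe_le_coe.2 (le_top : (2:ℕ∞) ≤ ⊤))) w v

lemma fd_self_swapped (hU : IsOpen U) (hu : ContDiffOn ℝ SM u U) (hx : x ∈ U) (w : E3) :
    fderiv ℝ (fun y => fderiv ℝ u y y) x w
      = (∑ k, x k * fderiv ℝ (fun y => fderiv ℝ u y w) x (e k)) + fderiv ℝ u x w := by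
  have hd := diffAt_fderiv_clm hU hu hx
  rw [fd_self hd, clm_expand (fderiv ℝ (fderiv ℝ u) x w) x]
  congr 1
  refine Finset.sum_congr rfl fun k _ => ?_
  rw [← fd_apply hd (e k) w, sym_all hU hu hx (e k) w, fd_apply hd w (e k)]

lemma div3_eq {F : E3 → E3} (h : ∀ i, DifferentiableAt ℝ (fun y => F y i) x) :
    div3 F x = ∑ i, fderiv ℝ (fun y => F y i) x (e i) := by
  have hF : fderiv ℝ F x = ContinuousLinearMap.pi (fun i => fderiv ℝ (fun y => F y i) x) :=
    fderiv_pi h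
  unfold div3
  refine Finset.sum_congr rfl fun i _ => ?_
  rw [show (Pi.single i 1 : E3) = e i from rfl, hF]
  rfl

end Stmt13
namespace Stmt13
variable {U : Set E3} {u c d : E3 → ℝ} {x : E3}

lemma rad_eq (u : (Fin 3 → ℝ) → ℝ) (x : E3) : radDer3 u x = fderiv ℝ u x x := by
  unfold radDer3 grad3
  exact (clm_expand (fderiv ℝ u x) x).symm

lemma fdadd (hc : DifferentiableAt ℝ c x) (hd : DifferentiableAt ℝ d x) (w : E3) :
    fderiv ℝ (fun y => c y + d y) x w = fderiv ℝ c x w + fderiv ℝ d x w := by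
  rw [fderiv_fun_add hc hd]; simp

lemma fdsub (hc : DifferentiableAt ℝ c x) (hd : DifferentiableAt ℝ d x) (w : E3) :
    fderiv ℝ (fun y => c y - d y) x w = fderiv ℝ c x w - fderiv ℝ d x w := by
  rw [fderiv_fun_sub hc hd]; simp

lemma fd_self' (hU : IsOpen U) (hu : ContDiffOn ℝ SM u U) (hx : x ∈ U) (w : E3) :
    fderiv ℝ (fun y => fderiv ℝ u y y) x w
      = fderiv ℝ (fun y => fderiv ℝ u y w) x x + fderiv ℝ u x w := by
  rw [fd_self_swapped hU hu hx w, clm_expand (fderiv ℝ (fun y => fderiv ℝ u y w) x) x]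

lemma prad_deriv (hU : IsOpen U) (hu : ContDiffOn ℝ SM u U) (hx : x ∈ U)
    (h0 : ∀ y ∈ U, fderiv ℝ u y y = 0) (w : E3) :
    fderiv ℝ (fun y => fderiv ℝ u y w) x x = - fderiv ℝ u x w := by
  have heq : (fun y => fderiv ℝ u y y) =ᶠ[nhds x] (fun _ => (0:ℝ)) :=
    Filter.eventuallyEq_of_mem (hU.mem_nhds hx) h0
  have h1 : fderiv ℝ (fun y => fderiv ℝ u y y) x w = 0 := by
    rw [heq.fderiv_eq]; simp
  rw [fd_self' hU hu hx w] at h1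
  linarith

end Stmt13

namespace Stmt13
variable {x : E3}
lemma diff_coord (j : Fin 3) : DifferentiableAt ℝ (fun y : E3 => y j) x :=
  (ContinuousLinearMap.proj j : E3 →L[ℝ] ℝ).differentiable.differentiableAt
lemma e_apply (i j : Fin 3) : e i j = if j = i then (1:ℝ) else 0 := by
  simp [e, Pi.single_apply]
end Stmt13


lemma key_alg (X df da : Fin 3 → ℝ) (p ddf b T : Fin 3 → Fin 3 → ℝ)
    (q : Fin 3 → Fin 3 → Fin 3 → ℝ) (a : ℝ)
    (hsf : ∀ i j, ddf i j = ddf j i) (hsb : ∀ i j, b i j = b j i)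
    (hC1 : ∀ i j, ∑ k, X k * q k i j = 0)
    (hE0 : ∑ i, ∑ j, (q i i j * df j + p i j * ddf i j) = 0)
    (hE3 : ∑ i, ∑ j, (q i i j * (∑ k, X k * ddf k j) - q i i j * df j + p i j * T i j) = 0) :
    (∑ i, ∑ j,
      (p i j * (da j * (df i + ∑ k, X k * ddf k i) + (∑ k, X k * df k) * b i j
         + a * (ddf i j + (T i j + ddf i j)) + (df j + ∑ k, X k * ddf k j) * da i)
       + (da j * (∑ k, X k * df k) + a * (df j + ∑ k, X k * ddf k j)) * q i i j))
    = (∑ i, ∑ j,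
      (((∑ l, p i l * da l) * X j + X i * (∑ l, p l j * da l) - (a + ∑ l, X l * da l) * p i j) * ddf i j
       + df j * ((∑ l, p i l * da l) * (if j = i then (1:ℝ) else 0)
          + X j * (∑ l, (p i l * b i l + da l * q i i l))
          + ((∑ l, p l j * da l) + X i * (∑ l, (p l j * b i l + da l * q i l j)))
          - (p i j * (da i + (da i + ∑ l, X l * b l i)) + (a + ∑ l, X l * da l) * q i i j)))) := by
  have hC1' : ∀ i j, X 0 * q 0 i j + X 1 * q 1 i j + X 2 * q 2 i j = 0 := by
    intro i j; simpa [Fin.sum_univ_three] using hC1 i j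
  simp only [Fin.sum_univ_three] at hE0 hE3 ⊢
  simp only [hsf 1 0, hsf 2 0, hsf 2 1, hsb 1 0, hsb 2 0, hsb 2 1] at hE0 hE3 ⊢
  norm_num [Fin.ext_iff]
  linear_combination (3*a + X 0 * da 0 + X 1 * da 1 + X 2 * da 2) * hE0 + a * hE3
    - da 0 * df 0 * hC1' 0 0 - da 0 * df 1 * hC1' 0 1 - da 0 * df 2 * hC1' 0 2
    - da 1 * df 0 * hC1' 1 0 - da 1 * df 1 * hC1' 1 1 - da 1 * df 2 * hC1' 1 2
    - da 2 * df 0 * hC1' 2 0 - da 2 * df 1 * hC1' 2 1 - da 2 * df 2 * hC1' 2 2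

open Stmt13

/-- Let `U ⊆ ℝ³ ∖ {0}` be open, let `P₀ : U → M₃(ℝ)` be a smooth matrix-valued
function each of whose entries `p` satisfies `⟨x, ∇p(x)⟩ = 0` on `U` (i.e. `D_x P₀ = 0`), let
`f₀ : U → ℝ` be smooth with `div(P₀∇f₀) = 0` on `U`, and let `α : U → ℝ` be smooth. With the
radial derivative `D_x f₀(x) = ⟨x, ∇f₀(x)⟩` and the matrix
`P̃(x) = (P₀(x)∇α(x))⊗x + x⊗(P₀(x)ᵀ∇α(x)) − (α(x) + ⟨x, ∇α(x)⟩)·P₀(x)`,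
one has `div(P₀ ∇(α·D_x f₀)) = div(P̃ ∇f₀)` on `U`. -/
theorem stmt13 (U : Set (Fin 3 → ℝ)) (hU : IsOpen U) (hU0 : ∀ x ∈ U, x ≠ 0)
    (P₀ : (Fin 3 → ℝ) → Fin 3 → Fin 3 → ℝ)
    (hP : ∀ i j, ContDiffOn ℝ (⊤ : ℕ∞) (fun x => P₀ x i j) U)
    (hPrad : ∀ x ∈ U, ∀ i j, fderiv ℝ (fun y => P₀ y i j) x x = 0)
    (f₀ α : (Fin 3 → ℝ) → ℝ)
    (hf : ContDiffOn ℝ (⊤ : ℕ∞) f₀ U) (hα : ContDiffOn ℝ (⊤ : ℕ∞) α U)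
    (hell : ∀ x ∈ U, div3 (fun y i => ∑ j, P₀ y i j * grad3 f₀ y j) x = 0) :
    ∀ x ∈ U,
      div3 (fun y i => ∑ j, P₀ y i j * grad3 (fun z => α z * radDer3 f₀ z) y j) x
        = div3 (fun y i => ∑ j,
            ((∑ l, P₀ y i l * grad3 α y l) * y j
              + y i * (∑ l, P₀ y l j * grad3 α y l)
              - (α y + radDer3 α y) * P₀ y i j) * grad3 f₀ y j) x := by
  intro x hx
  have hxn : U ∈ nhds x := hU.mem_nhds hx
  have hf' : ContDiffOn ℝ SM f₀ U := hf.of_le (by simp)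
  have hα' : ContDiffOn ℝ SM α U := hα.of_le (by simp)
  have hP' : ∀ i j, ContDiffOn ℝ SM (fun y => P₀ y i j) U := fun i j => (hP i j).of_le (by simp)
  have smgf : ∀ w : E3, ContDiffOn ℝ SM (fun y => fderiv ℝ f₀ y w) U := sm_deriv hU hf'
  have smgα : ∀ w : E3, ContDiffOn ℝ SM (fun y => fderiv ℝ α y w) U := sm_deriv hU hα'
  have smggf : ∀ v w : E3,
      ContDiffOn ℝ SM (fun y => fderiv ℝ (fun z => fderiv ℝ f₀ z v) y w) U :=
    fun v w => sm_deriv hU (smgf v) w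
  have smgP : ∀ i j (w : E3),
      ContDiffOn ℝ SM (fun y => fderiv ℝ (fun z => P₀ z i j) y w) U :=
    fun i j w => sm_deriv hU (hP' i j) w
  have smradf : ContDiffOn ℝ SM (fun y => fderiv ℝ f₀ y y) U := sm_rad hU hf'
  have smradα : ContDiffOn ℝ SM (fun y => fderiv ℝ α y y) U := sm_rad hU hα'
  have smGg : ∀ v : E3,
      ContDiffOn ℝ SM (fun y => fderiv ℝ (fun z => fderiv ℝ f₀ z v) y y) U :=
    fun v => sm_rad hU (smgf v)
  have hrado : radDer3 α = fun y => fderiv ℝ α y y := funext (rad_eq α)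
  have smrad3f : ContDiffOn ℝ SM (radDer3 f₀) U := by
    have h : radDer3 f₀ = fun z => fderiv ℝ f₀ z z := funext (rad_eq f₀)
    rw [h]; exact smradf
  have smv : ContDiffOn ℝ SM (fun z => α z * radDer3 f₀ z) U := hα'.mul smrad3f
  have smgv : ∀ w : E3,
      ContDiffOn ℝ SM (fun y => fderiv ℝ (fun z => α z * radDer3 f₀ z) y w) U :=
    sm_deriv hU smv
  -- gradient of α * Df, pointwise on U
  have hgv : ∀ y ∈ U, ∀ w : E3, fderiv ℝ (fun z => α z * radDer3 f₀ z) y w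
      = fderiv ℝ α y w * fderiv ℝ f₀ y y
        + α y * (fderiv ℝ f₀ y w + fderiv ℝ (fun z => fderiv ℝ f₀ z w) y y) := by
    intro y hy w
    have h : (fun z => α z * radDer3 f₀ z) = fun z => α z * fderiv ℝ f₀ z z :=
      funext fun z => by rw [rad_eq]
    rw [h, fdm (diffAt hU hα' hy) (diffAt hU smradf hy) w, fd_self' hU hf' hy w,
      clm_expand (fderiv ℝ (fun z => fderiv ℝ f₀ z w) y) y,
      ← clm_expand (fderiv ℝ (fun z => fderiv ℝ f₀ z w) y) y]
    ring
  -- divergence expansion of the elliptic operator at each point of U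
  have hdivG : ∀ y ∈ U, div3 (fun z i => ∑ j, P₀ z i j * grad3 f₀ z j) y
      = ∑ i, ∑ j, (fderiv ℝ (fun z => P₀ z i j) y (e i) * fderiv ℝ f₀ y (e j)
          + P₀ y i j * fderiv ℝ (fun z => fderiv ℝ f₀ z (e j)) y (e i)) := by
    intro y hy
    show div3 (fun z i => ∑ j, P₀ z i j * fderiv ℝ f₀ z (e j)) y = _
    rw [div3_eq (fun i =>
      diffAt hU (ContDiffOn.sum fun j _ => (hP' i j).mul (smgf (e j))) hy)]
    refine Finset.sum_congr rfl fun i _ => ?_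
    show fderiv ℝ (fun z => ∑ j, P₀ z i j * fderiv ℝ f₀ z (e j)) y (e i) = _
    rw [fds (fun j => (diffAt hU (hP' i j) hy).fun_mul (diffAt hU (smgf (e j)) hy)) (e i)]
    refine Finset.sum_congr rfl fun j _ => ?_
    rw [fdm (diffAt hU (hP' i j) hy) (diffAt hU (smgf (e j)) hy) (e i)]
    ring
  have hE0 : ∑ i, ∑ j, (fderiv ℝ (fun y => P₀ y i j) x (e i) * fderiv ℝ f₀ x (e j)
      + P₀ x i j * fderiv ℝ (fun y => fderiv ℝ f₀ y (e j)) x (e i)) = 0 := by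
    rw [← hdivG x hx]; exact hell x hx
  have hC1 : ∀ i j, ∑ k, x k * fderiv ℝ (fun y => P₀ y i j) x (e k) = 0 := fun i j => by
    rw [← clm_expand]; exact hPrad x hx i j
  have hsymf : ∀ i j, fderiv ℝ (fun y => fderiv ℝ f₀ y (e j)) x (e i)
      = fderiv ℝ (fun y => fderiv ℝ f₀ y (e i)) x (e j) :=
    fun i j => sym_all hU hf' hx (e j) (e i)
  have hsymb : ∀ i j, fderiv ℝ (fun y => fderiv ℝ α y (e j)) x (e i)
      = fderiv ℝ (fun y => fderiv ℝ α y (e i)) x (e j) :=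
    fun i j => sym_all hU hα' hx (e j) (e i)
  -- differentiated ellipticity identity
  have hE3 : ∑ i, ∑ j,
      (fderiv ℝ (fun y => P₀ y i j) x (e i)
          * (∑ k, x k * fderiv ℝ (fun y => fderiv ℝ f₀ y (e j)) x (e k))
        - fderiv ℝ (fun y => P₀ y i j) x (e i) * fderiv ℝ f₀ x (e j)
        + P₀ x i j * (∑ k, x k
            * fderiv ℝ (fun y => fderiv ℝ (fun z => fderiv ℝ f₀ z (e j)) y (e i)) x (e k)))
      = 0 := by
    have hΦ0 : ∀ y ∈ U, (fun y => ∑ i, ∑ j,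
        (fderiv ℝ (fun z => P₀ z i j) y (e i) * fderiv ℝ f₀ y (e j)
          + P₀ y i j * fderiv ℝ (fun z => fderiv ℝ f₀ z (e j)) y (e i))) y = 0 := by
      intro y hy
      simp only
      rw [← hdivG y hy]; exact hell y hy
    have hfd : fderiv ℝ (fun y => ∑ i, ∑ j,
        (fderiv ℝ (fun z => P₀ z i j) y (e i) * fderiv ℝ f₀ y (e j)
          + P₀ y i j * fderiv ℝ (fun z => fderiv ℝ f₀ z (e j)) y (e i))) x x = 0 := by
      have heq : (fun y => ∑ i, ∑ j,
          (fderiv ℝ (fun z => P₀ z i j) y (e i) * fderiv ℝ f₀ y (e j)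
            + P₀ y i j * fderiv ℝ (fun z => fderiv ℝ f₀ z (e j)) y (e i)))
          =ᶠ[nhds x] fun _ => (0:ℝ) :=
        Filter.eventuallyEq_of_mem hxn hΦ0
      rw [heq.fderiv_eq]; simp
    rw [← hfd]
    rw [fds (fun i => DifferentiableAt.fun_sum fun j _ =>
      ((diffAt hU (smgP i j (e i)) hx).fun_mul (diffAt hU (smgf (e j)) hx)).fun_add
        ((diffAt hU (hP' i j) hx).fun_mul (diffAt hU (smggf (e j) (e i)) hx))) x]
    refine Finset.sum_congr rfl fun i _ => ?_
    rw [fds (fun j =>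
      ((diffAt hU (smgP i j (e i)) hx).fun_mul (diffAt hU (smgf (e j)) hx)).fun_add
        ((diffAt hU (hP' i j) hx).fun_mul (diffAt hU (smggf (e j) (e i)) hx))) x]
    refine Finset.sum_congr rfl fun j _ => ?_
    rw [fdadd ((diffAt hU (smgP i j (e i)) hx).fun_mul (diffAt hU (smgf (e j)) hx))
      ((diffAt hU (hP' i j) hx).fun_mul (diffAt hU (smggf (e j) (e i)) hx)) x]
    rw [fdm (diffAt hU (smgP i j (e i)) hx) (diffAt hU (smgf (e j)) hx) x]
    rw [fdm (diffAt hU (hP' i j) hx) (diffAt hU (smggf (e j) (e i)) hx) x]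
    rw [prad_deriv hU (hP' i j) hx (fun y hy => hPrad y hy i j) (e i)]
    rw [hPrad x hx i j]
    rw [clm_expand (fderiv ℝ (fun y => fderiv ℝ f₀ y (e j)) x) x]
    rw [clm_expand (fderiv ℝ (fun y => fderiv ℝ (fun z => fderiv ℝ f₀ z (e j)) y (e i)) x) x]
    ring
  -- LHS expansion
  have hLHS : div3 (fun y i => ∑ j,
        P₀ y i j * fderiv ℝ (fun z => α z * radDer3 f₀ z) y (e j)) x
      = ∑ i, ∑ j,
        (P₀ x i j * (fderiv ℝ α x (e j)
              * (fderiv ℝ f₀ x (e i) + ∑ k, x k * fderiv ℝ (fun y => fderiv ℝ f₀ y (e i)) x (e k))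
            + (∑ k, x k * fderiv ℝ f₀ x (e k)) * fderiv ℝ (fun y => fderiv ℝ α y (e j)) x (e i)
            + α x * (fderiv ℝ (fun y => fderiv ℝ f₀ y (e j)) x (e i)
                + ((∑ k, x k * fderiv ℝ (fun y =>
                      fderiv ℝ (fun z => fderiv ℝ f₀ z (e j)) y (e i)) x (e k))
                   + fderiv ℝ (fun y => fderiv ℝ f₀ y (e j)) x (e i)))
            + (fderiv ℝ f₀ x (e j) + ∑ k, x k * fderiv ℝ (fun y => fderiv ℝ f₀ y (e j)) x (e k))
              * fderiv ℝ α x (e i))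
          + (fderiv ℝ α x (e j) * (∑ k, x k * fderiv ℝ f₀ x (e k))
              + α x * (fderiv ℝ f₀ x (e j)
                  + ∑ k, x k * fderiv ℝ (fun y => fderiv ℝ f₀ y (e j)) x (e k)))
            * fderiv ℝ (fun y => P₀ y i j) x (e i)) := by
    rw [div3_eq (fun i =>
      diffAt hU (ContDiffOn.sum fun j _ => (hP' i j).mul (smgv (e j))) hx)]
    refine Finset.sum_congr rfl fun i _ => ?_
    show fderiv ℝ (fun y => ∑ j,
      P₀ y i j * fderiv ℝ (fun z => α z * radDer3 f₀ z) y (e j)) x (e i) = _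
    rw [fds (fun j => (diffAt hU (hP' i j) hx).fun_mul (diffAt hU (smgv (e j)) hx)) (e i)]
    refine Finset.sum_congr rfl fun j _ => ?_
    rw [fdm (diffAt hU (hP' i j) hx) (diffAt hU (smgv (e j)) hx) (e i)]
    have hGx : fderiv ℝ (fun z => α z * radDer3 f₀ z) x (e j)
        = fderiv ℝ α x (e j) * (∑ k, x k * fderiv ℝ f₀ x (e k))
          + α x * (fderiv ℝ f₀ x (e j)
              + ∑ k, x k * fderiv ℝ (fun y => fderiv ℝ f₀ y (e j)) x (e k)) := by
      rw [hgv x hx (e j), clm_expand (fderiv ℝ f₀ x) x,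
        clm_expand (fderiv ℝ (fun z => fderiv ℝ f₀ z (e j)) x) x]
    have hDG : fderiv ℝ (fun y => fderiv ℝ (fun z => α z * radDer3 f₀ z) y (e j)) x (e i)
        = fderiv ℝ (fun y => fderiv ℝ α y (e j)) x (e i) * (∑ k, x k * fderiv ℝ f₀ x (e k))
          + fderiv ℝ α x (e j) * (fderiv ℝ f₀ x (e i)
              + ∑ k, x k * fderiv ℝ (fun y => fderiv ℝ f₀ y (e i)) x (e k))
          + fderiv ℝ α x (e i) * (fderiv ℝ f₀ x (e j)
              + ∑ k, x k * fderiv ℝ (fun y => fderiv ℝ f₀ y (e j)) x (e k))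
          + α x * (fderiv ℝ (fun y => fderiv ℝ f₀ y (e j)) x (e i)
              + ((∑ k, x k * fderiv ℝ (fun y =>
                    fderiv ℝ (fun z => fderiv ℝ f₀ z (e j)) y (e i)) x (e k))
                 + fderiv ℝ (fun y => fderiv ℝ f₀ y (e j)) x (e i))) := by
      have heq : (fun y => fderiv ℝ (fun z => α z * radDer3 f₀ z) y (e j)) =ᶠ[nhds x]
          (fun y => fderiv ℝ α y (e j) * fderiv ℝ f₀ y y
            + α y * (fderiv ℝ f₀ y (e j) + fderiv ℝ (fun z => fderiv ℝ f₀ z (e j)) y y)) :=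
        Filter.eventuallyEq_of_mem hxn (fun y hy => hgv y hy (e j))
      rw [heq.fderiv_eq]
      rw [fdadd ((diffAt hU (smgα (e j)) hx).fun_mul (diffAt hU smradf hx))
        ((diffAt hU hα' hx).fun_mul
          ((diffAt hU (smgf (e j)) hx).fun_add (diffAt hU (smGg (e j)) hx))) (e i)]
      rw [fdm (diffAt hU (smgα (e j)) hx) (diffAt hU smradf hx) (e i)]
      rw [fdm (diffAt hU hα' hx)
        ((diffAt hU (smgf (e j)) hx).fun_add (diffAt hU (smGg (e j)) hx)) (e i)]
      rw [fdadd (diffAt hU (smgf (e j)) hx) (diffAt hU (smGg (e j)) hx) (e i)]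
      rw [fd_self_swapped hU hf' hx (e i), fd_self_swapped hU (smgf (e j)) hx (e i)]
      rw [clm_expand (fderiv ℝ f₀ x) x,
        clm_expand (fderiv ℝ (fun z => fderiv ℝ f₀ z (e j)) x) x]
      ring
    rw [hGx, hDG]
    ring
  -- RHS expansion
  have sms1 : ∀ i, ContDiffOn ℝ SM (fun y => ∑ l, P₀ y i l * fderiv ℝ α y (e l)) U :=
    fun i => ContDiffOn.sum fun l _ => (hP' i l).mul (smgα (e l))
  have sms2 : ∀ j, ContDiffOn ℝ SM (fun y => ∑ l, P₀ y l j * fderiv ℝ α y (e l)) U :=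
    fun j => ContDiffOn.sum fun l _ => (hP' l j).mul (smgα (e l))
  have smA : ∀ i j, ContDiffOn ℝ SM (fun y =>
      (∑ l, P₀ y i l * fderiv ℝ α y (e l)) * y j
        + y i * (∑ l, P₀ y l j * fderiv ℝ α y (e l))
        - (α y + fderiv ℝ α y y) * P₀ y i j) U :=
    fun i j => (((sms1 i).mul (sm_coord j)).add ((sm_coord i).mul (sms2 j))).sub
      ((hα'.add smradα).mul (hP' i j))
  have hRHS : div3 (fun y i => ∑ j,
        ((∑ l, P₀ y i l * fderiv ℝ α y (e l)) * y j
          + y i * (∑ l, P₀ y l j * fderiv ℝ α y (e l))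
          - (α y + fderiv ℝ α y y) * P₀ y i j) * fderiv ℝ f₀ y (e j)) x
      = ∑ i, ∑ j,
        (((∑ l, P₀ x i l * fderiv ℝ α x (e l)) * x j
            + x i * (∑ l, P₀ x l j * fderiv ℝ α x (e l))
            - (α x + ∑ l, x l * fderiv ℝ α x (e l)) * P₀ x i j)
              * fderiv ℝ (fun y => fderiv ℝ f₀ y (e j)) x (e i)
          + fderiv ℝ f₀ x (e j)
            * ((∑ l, P₀ x i l * fderiv ℝ α x (e l)) * (if j = i then (1:ℝ) else 0)
              + x j * (∑ l, (P₀ x i l * fderiv ℝ (fun y => fderiv ℝ α y (e l)) x (e i)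
                  + fderiv ℝ α x (e l) * fderiv ℝ (fun y => P₀ y i l) x (e i)))
              + ((∑ l, P₀ x l j * fderiv ℝ α x (e l))
                  + x i * (∑ l, (P₀ x l j * fderiv ℝ (fun y => fderiv ℝ α y (e l)) x (e i)
                      + fderiv ℝ α x (e l) * fderiv ℝ (fun y => P₀ y l j) x (e i))))
              - (P₀ x i j * (fderiv ℝ α x (e i) + (fderiv ℝ α x (e i)
                    + ∑ l, x l * fderiv ℝ (fun y => fderiv ℝ α y (e i)) x (e l)))
                 + (α x + ∑ l, x l * fderiv ℝ α x (e l))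
                    * fderiv ℝ (fun y => P₀ y i j) x (e i)))) := by
    rw [div3_eq (fun i =>
      diffAt hU (ContDiffOn.sum fun j _ => (smA i j).mul (smgf (e j))) hx)]
    refine Finset.sum_congr rfl fun i _ => ?_
    show fderiv ℝ (fun y => ∑ j,
        ((∑ l, P₀ y i l * fderiv ℝ α y (e l)) * y j
          + y i * (∑ l, P₀ y l j * fderiv ℝ α y (e l))
          - (α y + fderiv ℝ α y y) * P₀ y i j) * fderiv ℝ f₀ y (e j)) x (e i) = _
    rw [fds (fun j => (diffAt hU (smA i j) hx).fun_mul (diffAt hU (smgf (e j)) hx)) (e i)]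
    refine Finset.sum_congr rfl fun j _ => ?_
    rw [fdm (diffAt hU (smA i j) hx) (diffAt hU (smgf (e j)) hx) (e i)]
    have hds1 : fderiv ℝ (fun y => ∑ l, P₀ y i l * fderiv ℝ α y (e l)) x (e i)
        = ∑ l, (P₀ x i l * fderiv ℝ (fun y => fderiv ℝ α y (e l)) x (e i)
            + fderiv ℝ α x (e l) * fderiv ℝ (fun y => P₀ y i l) x (e i)) := by
      rw [fds (fun l => (diffAt hU (hP' i l) hx).fun_mul (diffAt hU (smgα (e l)) hx)) (e i)]
      exact Finset.sum_congr rfl fun l _ =>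
        fdm (diffAt hU (hP' i l) hx) (diffAt hU (smgα (e l)) hx) (e i)
    have hds2 : fderiv ℝ (fun y => ∑ l, P₀ y l j * fderiv ℝ α y (e l)) x (e i)
        = ∑ l, (P₀ x l j * fderiv ℝ (fun y => fderiv ℝ α y (e l)) x (e i)
            + fderiv ℝ α x (e l) * fderiv ℝ (fun y => P₀ y l j) x (e i)) := by
      rw [fds (fun l => (diffAt hU (hP' l j) hx).fun_mul (diffAt hU (smgα (e l)) hx)) (e i)]
      exact Finset.sum_congr rfl fun l _ =>
        fdm (diffAt hU (hP' l j) hx) (diffAt hU (smgα (e l)) hx) (e i)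
    have hDA : fderiv ℝ (fun y =>
        (∑ l, P₀ y i l * fderiv ℝ α y (e l)) * y j
          + y i * (∑ l, P₀ y l j * fderiv ℝ α y (e l))
          - (α y + fderiv ℝ α y y) * P₀ y i j) x (e i)
        = (∑ l, P₀ x i l * fderiv ℝ α x (e l)) * (if j = i then (1:ℝ) else 0)
          + x j * (∑ l, (P₀ x i l * fderiv ℝ (fun y => fderiv ℝ α y (e l)) x (e i)
              + fderiv ℝ α x (e l) * fderiv ℝ (fun y => P₀ y i l) x (e i)))
          + ((∑ l, P₀ x l j * fderiv ℝ α x (e l))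
              + x i * (∑ l, (P₀ x l j * fderiv ℝ (fun y => fderiv ℝ α y (e l)) x (e i)
                  + fderiv ℝ α x (e l) * fderiv ℝ (fun y => P₀ y l j) x (e i))))
          - (P₀ x i j * (fderiv ℝ α x (e i) + (fderiv ℝ α x (e i)
                + ∑ l, x l * fderiv ℝ (fun y => fderiv ℝ α y (e i)) x (e l)))
             + (α x + ∑ l, x l * fderiv ℝ α x (e l))
                * fderiv ℝ (fun y => P₀ y i j) x (e i)) := by
      rw [fdsub (((diffAt hU (sms1 i) hx).fun_mul (diff_coord j)).fun_add
          ((diff_coord i).fun_mul (diffAt hU (sms2 j) hx)))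
        (((diffAt hU hα' hx).fun_add (diffAt hU smradα hx)).fun_mul (diffAt hU (hP' i j) hx)) (e i)]
      rw [fdadd ((diffAt hU (sms1 i) hx).fun_mul (diff_coord j))
          ((diff_coord i).fun_mul (diffAt hU (sms2 j) hx)) (e i)]
      rw [fdm (diffAt hU (sms1 i) hx) (diff_coord j) (e i)]
      rw [fdm (diff_coord i) (diffAt hU (sms2 j) hx) (e i)]
      rw [fdm ((diffAt hU hα' hx).fun_add (diffAt hU smradα hx)) (diffAt hU (hP' i j) hx) (e i)]
      rw [fdadd (diffAt hU hα' hx) (diffAt hU smradα hx) (e i)]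
      rw [fd_self_swapped hU hα' hx (e i)]
      rw [hds1, hds2, fdcoord j (e i), fdcoord i (e i), e_apply, e_apply]
      rw [clm_expand (fderiv ℝ α x) x]
      simp only [if_true]
      ring
    rw [hDA, clm_expand (fderiv ℝ α x) x]
  have hfield : (fun y (i : Fin 3) => ∑ j,
      ((∑ l, P₀ y i l * fderiv ℝ α y (e l)) * y j
        + y i * (∑ l, P₀ y l j * fderiv ℝ α y (e l))
        - (α y + radDer3 α y) * P₀ y i j) * fderiv ℝ f₀ y (e j))
      = (fun y i => ∑ j,
      ((∑ l, P₀ y i l * fderiv ℝ α y (e l)) * y j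
        + y i * (∑ l, P₀ y l j * fderiv ℝ α y (e l))
        - (α y + fderiv ℝ α y y) * P₀ y i j) * fderiv ℝ f₀ y (e j)) := by
    simp only [hrado]
  show div3 (fun y i => ∑ j, P₀ y i j * fderiv ℝ (fun z => α z * radDer3 f₀ z) y (e j)) x
      = div3 (fun y i => ∑ j,
        ((∑ l, P₀ y i l * fderiv ℝ α y (e l)) * y j
          + y i * (∑ l, P₀ y l j * fderiv ℝ α y (e l))
          - (α y + radDer3 α y) * P₀ y i j) * fderiv ℝ f₀ y (e j)) x
  rw [hfield, hLHS, hRHS]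
  exact key_alg x (fun j => fderiv ℝ f₀ x (e j)) (fun j => fderiv ℝ α x (e j))
    (fun i j => P₀ x i j)
    (fun i j => fderiv ℝ (fun y => fderiv ℝ f₀ y (e j)) x (e i))
    (fun i j => fderiv ℝ (fun y => fderiv ℝ α y (e j)) x (e i))
    (fun i j => ∑ k, x k * fderiv ℝ (fun y =>
        fderiv ℝ (fun z => fderiv ℝ f₀ z (e j)) y (e i)) x (e k))
    (fun k i j => fderiv ℝ (fun y => P₀ y i j) x (e k))
    (α x) hsymf hsymb hC1 hE0 hE3
end

section
/- Let n ≥ 2 and let s, r ∈ ℝ with s > 1/2 and s + r > n/2. Then there exists a constant C > 0 (depending on s, r, n) such that for every Schwartz function f ∈ 𝒮(ℝⁿ): ‖f‖_{L^∞(ℝⁿ)}² ≤ C · ∫_{ℝⁿ} |f̂(ξ)|² (1 + |ξ'|²)^r (1 + |ξ|²)^s dξ, where ξ = (ξ', ξₙ) with ξ' ∈ ℝ^{n−1} and f̂ is the Fourier transform of f. -/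
open MeasureTheory FourierTransform
open Real SchwartzMap

lemma aux_1d_integrable {s : ℝ} (hs : 1/2 < s) :
    Integrable (fun u : ℝ => (1 + u ^ 2) ^ (-s)) := by
  have h := integrable_rpow_neg_one_add_norm_sq (E := ℝ) (μ := volume) (r := 2 * s)
    (by rw [Module.finrank_self]; push_cast; linarith)
  have : -(2 * s) / 2 = -s := by ring
  rw [this] at h
  simpa [Real.norm_eq_abs, sq_abs] using h

lemma aux_shift_eq {s A : ℝ} (hA : 0 ≤ A) (t : ℝ) :
    ((1 + A) + t ^ 2) ^ (-s)
      = ((1 + A) ^ (-s) * (1 + A) ^ ((1:ℝ)/2)) * ((1 + (t / (1 + A) ^ ((1:ℝ)/2)) ^ 2) ^ (-s)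
          / (1 + A) ^ ((1:ℝ)/2)) := by
  have hpos : (0:ℝ) < 1 + A := by linarith
  set c : ℝ := (1 + A) ^ ((1:ℝ)/2) with hc
  have hcpos : 0 < c := Real.rpow_pos_of_pos hpos _
  have hc2 : c ^ 2 = 1 + A := by
    rw [hc, ← Real.rpow_natCast ((1+A) ^ ((1:ℝ)/2)) 2, ← Real.rpow_mul hpos.le]
    norm_num
  have key : (1 + A) + t ^ 2 = (1 + A) * (1 + (t / c) ^ 2) := by
    field_simp [hc2]
    rw [hc2]; ring
  rw [key, Real.mul_rpow hpos.le (by positivity)]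
  field_simp

lemma aux_1d_shifted {s A : ℝ} (hs : 1/2 < s) (hA : 0 ≤ A) :
    Integrable (fun t : ℝ => ((1 + A) + t ^ 2) ^ (-s)) ∧
    ∫ t : ℝ, ((1 + A) + t ^ 2) ^ (-s)
      = (∫ u : ℝ, (1 + u ^ 2) ^ (-s)) * (1 + A) ^ ((1:ℝ)/2 - s) := by
  have hpos : (0:ℝ) < 1 + A := by linarith
  set c : ℝ := (1 + A) ^ ((1:ℝ)/2) with hc
  have hcpos : 0 < c := Real.rpow_pos_of_pos hpos _
  have hint : Integrable (fun t : ℝ => (1 + (t / c) ^ 2) ^ (-s)) :=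
    (aux_1d_integrable hs).comp_div hcpos.ne'
  have heq : (fun t : ℝ => ((1 + A) + t ^ 2) ^ (-s))
      = fun t => ((1 + A) ^ (-s) * c) * ((1 + (t / c) ^ 2) ^ (-s) / c) := by
    funext t
    simpa [hc] using aux_shift_eq (s := s) hA t
  constructor
  · rw [heq]
    exact ((hint.div_const c).const_mul _)
  · rw [heq]
    rw [integral_const_mul]
    rw [integral_div, MeasureTheory.Measure.integral_comp_div (fun u : ℝ => (1 + u ^ 2) ^ (-s)) c]
    rw [abs_of_pos hcpos, smul_eq_mul]
    have : (1 + A) ^ ((1:ℝ)/2 - s) = (1 + A) ^ (-s) * c := by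
      rw [hc, ← Real.rpow_add hpos]; ring_nf
    rw [this]
    field_simp

lemma aux_outer_integrable {d : ℕ} {s r : ℝ} (hsr : (d : ℝ) < 2 * (s + r) - 1) :
    Integrable (fun y : Fin d → ℝ => (1 + ∑ j, y j ^ 2) ^ ((1:ℝ)/2 - s - r)) := by
  have h := integrable_rpow_neg_one_add_norm_sq (E := EuclideanSpace ℝ (Fin d)) (μ := volume)
    (r := 2 * (s + r) - 1)
    (by rw [finrank_euclideanSpace, Fintype.card_fin]; linarith)
  have he : -(2 * (s + r) - 1) / 2 = (1:ℝ)/2 - s - r := by ring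
  rw [he] at h
  have key := ((EuclideanSpace.volume_preserving_symm_measurableEquiv_toLp (Fin d)).integrable_comp_emb
    ((MeasurableEquiv.toLp 2 (Fin d → ℝ)).symm).measurableEmbedding
    (g := fun y : Fin d → ℝ => (1 + ∑ j, y j ^ 2) ^ ((1:ℝ)/2 - s - r))).1
  apply key
  have : (fun y : Fin d → ℝ => (1 + ∑ j, y j ^ 2) ^ ((1:ℝ)/2 - s - r)) ∘
      ((MeasurableEquiv.toLp 2 (Fin d → ℝ)).symm)
      = fun x : EuclideanSpace ℝ (Fin d) => (1 + ‖x‖ ^ 2) ^ ((1:ℝ)/2 - s - r) := by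
    funext x
    have : ‖x‖ ^ 2 = ∑ j, x j ^ 2 := by
      rw [EuclideanSpace.norm_eq]
      rw [Real.sq_sqrt (by positivity)]
      simp [Real.norm_eq_abs, sq_abs]
    simp only [Function.comp_apply, this]
    rfl
  rw [this]
  exact h

lemma weight_integrable (d : ℕ) {s r : ℝ} (hs : 1/2 < s) (hsr : (d + 1 : ℝ)/2 < s + r) :
    Integrable (fun ξ : EuclideanSpace ℝ (Fin (d + 1)) =>
      (1 + ∑ i : Fin d, ξ i.castSucc ^ 2) ^ (-r) * (1 + ‖ξ‖ ^ 2) ^ (-s)) := by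
  -- the function on the product space ℝ × (Fin d → ℝ)
  set G : ℝ × (Fin d → ℝ) → ℝ := fun p =>
    (1 + ∑ j, p.2 j ^ 2) ^ (-r) * ((1 + ∑ j, p.2 j ^ 2) + p.1 ^ 2) ^ (-s) with hG
  have hScont : Continuous fun y : Fin d → ℝ => ∑ j, y j ^ 2 := by
    exact continuous_finset_sum _ fun j _ => (continuous_apply j).pow 2
  have hSnn : ∀ y : Fin d → ℝ, 0 ≤ ∑ j, y j ^ 2 := fun y =>
    Finset.sum_nonneg fun j _ => sq_nonneg _
  have hGcont : Continuous G := by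
    apply Continuous.mul
    · exact (continuous_const.add (hScont.comp continuous_snd)).rpow_const
        (fun p => Or.inl (by have := hSnn p.2; show (1:ℝ) + ∑ j, p.2 j ^ 2 ≠ 0; positivity))
    · exact ((continuous_const.add (hScont.comp continuous_snd)).add
        (continuous_fst.pow 2)).rpow_const
        (fun p => Or.inl (by have := hSnn p.2; show (1:ℝ) + ∑ j, p.2 j ^ 2 + p.1 ^ 2 ≠ 0; positivity))
  have hGint : Integrable G := by
    rw [Measure.volume_eq_prod]
    refine (integrable_prod_iff' (by rw [← Measure.volume_eq_prod]; exact hGcont.aestronglyMeasurable)).2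
      ⟨Filter.Eventually.of_forall fun y => ?_, ?_⟩
    · simpa [hG] using ((aux_1d_shifted hs (hSnn y)).1.const_mul ((1 + ∑ j, y j ^ 2) ^ (-r)))
    · have hinner : (fun y : Fin d → ℝ => ∫ t, ‖G (t, y)‖)
          = fun y => (∫ u : ℝ, (1 + u ^ 2) ^ (-s)) * (1 + ∑ j, y j ^ 2) ^ ((1:ℝ)/2 - s - r) := by
        funext y
        have hA := hSnn y
        have hpos : (0:ℝ) < 1 + ∑ j, y j ^ 2 := by linarith
        have h1 : ∀ t : ℝ, ‖G (t, y)‖ = (1 + ∑ j, y j ^ 2) ^ (-r) *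
            ((1 + ∑ j, y j ^ 2) + t ^ 2) ^ (-s) := by
          intro t
          rw [Real.norm_of_nonneg (by positivity)]
        simp_rw [h1]
        rw [integral_const_mul, (aux_1d_shifted hs hA).2]
        rw [← mul_assoc, mul_comm ((1 + ∑ j, y j ^ 2) ^ (-r)), mul_assoc,
          ← Real.rpow_add hpos]
        rw [show -r + ((1:ℝ)/2 - s) = (1:ℝ)/2 - s - r from by ring]
      rw [hinner]
      exact (aux_outer_integrable (by push_cast at hsr ⊢; linarith)).const_mul _
  -- transfer through piFinSuccAbove
  have h2 : Integrable (G ∘ (MeasurableEquiv.piFinSuccAbove (fun _ => ℝ) (Fin.last d))) := by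
    exact ((volume_preserving_piFinSuccAbove (fun _ : Fin (d+1) => ℝ)
      (Fin.last d)).integrable_comp_emb
      (MeasurableEquiv.piFinSuccAbove (fun _ => ℝ) (Fin.last d)).measurableEmbedding).2 hGint
  -- transfer through EuclideanSpace.measurableEquiv
  have heq : (fun ξ : EuclideanSpace ℝ (Fin (d + 1)) =>
      (1 + ∑ i : Fin d, ξ i.castSucc ^ 2) ^ (-r) * (1 + ‖ξ‖ ^ 2) ^ (-s))
      = (G ∘ (MeasurableEquiv.piFinSuccAbove (fun _ => ℝ) (Fin.last d))) ∘
        ((MeasurableEquiv.toLp 2 (Fin (d+1) → ℝ)).symm) := by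
    funext ξ
    have hnorm : ‖ξ‖ ^ 2 = ∑ i : Fin (d+1), ξ i ^ 2 := by
      rw [EuclideanSpace.norm_eq, Real.sq_sqrt (by positivity)]
      simp [Real.norm_eq_abs, sq_abs]
    have hsum : ∑ i : Fin (d+1), ξ i ^ 2
        = (∑ i : Fin d, ξ i.castSucc ^ 2) + ξ (Fin.last d) ^ 2 := Fin.sum_univ_castSucc _
    have hRHS : ((G ∘ ⇑(MeasurableEquiv.piFinSuccAbove (fun _ => ℝ) (Fin.last d))) ∘
        ⇑((MeasurableEquiv.toLp 2 (Fin (d+1) → ℝ)).symm)) ξ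
        = (1 + ∑ i : Fin d, ξ i.castSucc ^ 2) ^ (-r) *
          ((1 + ∑ i : Fin d, ξ i.castSucc ^ 2) + ξ (Fin.last d) ^ 2) ^ (-s) := by
      simp only [Function.comp_apply, hG, MeasurableEquiv.piFinSuccAbove_apply,
        Fin.insertNthEquiv_last, Fin.snocEquiv_symm_apply]
      rfl
    rw [hRHS, hnorm, hsum, ← add_assoc]
  rw [heq]
  exact ((EuclideanSpace.volume_preserving_symm_measurableEquiv_toLp (Fin (d+1))).integrable_comp_emb
    ((MeasurableEquiv.toLp 2 (Fin (d+1) → ℝ)).symm).measurableEmbedding).2 h2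

lemma schwartz_bound {d : ℕ} (g : SchwartzMap (EuclideanSpace ℝ (Fin d)) ℂ) (K : ℕ) :
    ∃ C : ℝ, 0 ≤ C ∧ ∀ x, (1 + ‖x‖) ^ K * ‖g x‖ ≤ C := by
  obtain ⟨C0, hC0pos, h0⟩ := g.decay 0 0
  obtain ⟨CK, hCKpos, hK⟩ := g.decay K 0
  refine ⟨2 ^ K * (C0 + CK), by positivity, fun x => ?_⟩
  have h0x := h0 x
  have hKx := hK x
  rw [pow_zero, one_mul, norm_iteratedFDeriv_zero] at h0x
  rw [norm_iteratedFDeriv_zero] at hKx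
  have hb : (1 + ‖x‖) ^ K ≤ 2 ^ K * (1 + ‖x‖ ^ K) := by
    rcases le_total ‖x‖ 1 with h | h
    · calc (1 + ‖x‖) ^ K ≤ 2 ^ K := by
            apply pow_le_pow_left₀ (by positivity) (by linarith)
          _ ≤ 2 ^ K * (1 + ‖x‖ ^ K) := by
            nlinarith [pow_nonneg (norm_nonneg x) K, pow_pos (show (0:ℝ) < 2 by norm_num) K]
    · calc (1 + ‖x‖) ^ K ≤ (2 * ‖x‖) ^ K := by
            apply pow_le_pow_left₀ (by positivity) (by linarith)
          _ = 2 ^ K * ‖x‖ ^ K := by rw [mul_pow]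
          _ ≤ 2 ^ K * (1 + ‖x‖ ^ K) := by
            have : (0:ℝ) < 2 ^ K := by positivity
            nlinarith
  calc (1 + ‖x‖) ^ K * ‖g x‖ ≤ 2 ^ K * (1 + ‖x‖ ^ K) * ‖g x‖ := by
        apply mul_le_mul_of_nonneg_right hb (norm_nonneg _)
    _ = 2 ^ K * (‖g x‖ + ‖x‖ ^ K * ‖g x‖) := by ring
    _ ≤ 2 ^ K * (C0 + CK) := by
        have : (0:ℝ) < 2 ^ K := by positivity
        nlinarith

-- pointwise bound on the weight
lemma weight_le {d : ℕ} {s r : ℝ} (hs : 0 < s) {K : ℕ} (hK : 2 * (|r| + s) ≤ (K : ℝ))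
    (ξ : EuclideanSpace ℝ (Fin (d + 1))) :
    (1 + ∑ i : Fin d, ξ i.castSucc ^ 2) ^ r * (1 + ‖ξ‖ ^ 2) ^ s ≤ (1 + ‖ξ‖) ^ K := by
  set A : ℝ := 1 + ∑ i : Fin d, ξ i.castSucc ^ 2 with hA
  set B : ℝ := 1 + ‖ξ‖ ^ 2 with hB
  have hSnn : 0 ≤ ∑ i : Fin d, ξ i.castSucc ^ 2 := Finset.sum_nonneg fun i _ => sq_nonneg _
  have hA1 : (1:ℝ) ≤ A := by rw [hA]; linarith
  have hB1 : (1:ℝ) ≤ B := by rw [hB]; nlinarith [sq_nonneg ‖ξ‖]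
  have hAB : A ≤ B := by
    rw [hA, hB]
    have : ‖ξ‖ ^ 2 = ∑ i : Fin (d+1), ξ i ^ 2 := by
      rw [EuclideanSpace.norm_eq, Real.sq_sqrt (by positivity)]
      simp [Real.norm_eq_abs, sq_abs]
    rw [this, Fin.sum_univ_castSucc]
    nlinarith [sq_nonneg (ξ (Fin.last d))]
  have h1 : A ^ r ≤ B ^ |r| := by
    calc A ^ r ≤ A ^ |r| := Real.rpow_le_rpow_of_exponent_le hA1 (le_abs_self r)
      _ ≤ B ^ |r| := Real.rpow_le_rpow (by linarith) hAB (abs_nonneg r)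
  have h2 : A ^ r * B ^ s ≤ B ^ (|r| + s) := by
    rw [Real.rpow_add (by linarith : (0:ℝ) < B)]
    exact mul_le_mul_of_nonneg_right h1 (Real.rpow_nonneg (by linarith) s)
  refine h2.trans ?_
  have hBle : B ≤ (1 + ‖ξ‖) ^ 2 := by
    rw [hB]; nlinarith [norm_nonneg ξ]
  calc B ^ (|r| + s) ≤ ((1 + ‖ξ‖) ^ 2) ^ (|r| + s) := by
        apply Real.rpow_le_rpow (by linarith) hBle (by positivity)
    _ = (1 + ‖ξ‖) ^ (2 * (|r| + s)) := by
        rw [← Real.rpow_natCast (1 + ‖ξ‖) 2, ← Real.rpow_mul (by positivity)]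
        norm_num
    _ ≤ (1 + ‖ξ‖) ^ (K : ℝ) := by
        apply Real.rpow_le_rpow_of_exponent_le (by linarith [norm_nonneg ξ]) hK
    _ = (1 + ‖ξ‖) ^ K := by rw [Real.rpow_natCast]

lemma rhs_integrable {d : ℕ} {s r : ℝ} (hs : 0 < s)
    (g : SchwartzMap (EuclideanSpace ℝ (Fin (d + 1))) ℂ) :
    Integrable (fun ξ : EuclideanSpace ℝ (Fin (d + 1)) =>
      ‖g ξ‖ ^ 2 * (1 + ∑ i : Fin d, ξ i.castSucc ^ 2) ^ r * (1 + ‖ξ‖ ^ 2) ^ s) := by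
  obtain ⟨K, hK⟩ := exists_nat_ge (2 * (|r| + s))
  obtain ⟨C, hC0, hC⟩ := schwartz_bound g K
  have hScont : Continuous fun ξ : EuclideanSpace ℝ (Fin (d+1)) =>
      ∑ i : Fin d, ξ i.castSucc ^ 2 := by
    exact continuous_finset_sum _ fun i _ => by fun_prop
  have hSnn : ∀ ξ : EuclideanSpace ℝ (Fin (d+1)), 0 ≤ ∑ i : Fin d, ξ i.castSucc ^ 2 :=
    fun ξ => Finset.sum_nonneg fun i _ => sq_nonneg _
  have hcont : Continuous (fun ξ : EuclideanSpace ℝ (Fin (d + 1)) =>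
      ‖g ξ‖ ^ 2 * (1 + ∑ i : Fin d, ξ i.castSucc ^ 2) ^ r * (1 + ‖ξ‖ ^ 2) ^ s) := by
    apply Continuous.mul
    apply Continuous.mul
    · exact (g.continuous.norm.pow 2)
    · exact (continuous_const.add hScont).rpow_const
        (fun ξ => Or.inl (by have := hSnn ξ; show (1:ℝ) + ∑ i : Fin d, ξ i.castSucc ^ 2 ≠ 0; positivity))
    · exact (continuous_const.add (continuous_norm.pow 2)).rpow_const
        (fun ξ => Or.inl (by show (1:ℝ) + ‖ξ‖ ^ 2 ≠ 0; positivity))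
  apply Integrable.mono' ((g.integrable (μ := volume)).norm.const_mul C)
    hcont.aestronglyMeasurable
  refine Filter.Eventually.of_forall fun ξ => ?_
  have hnn : 0 ≤ ‖g ξ‖ ^ 2 * (1 + ∑ i : Fin d, ξ i.castSucc ^ 2) ^ r * (1 + ‖ξ‖ ^ 2) ^ s := by
    have := hSnn ξ
    positivity
  rw [Real.norm_of_nonneg hnn]
  have hw := weight_le hs hK ξ
  calc ‖g ξ‖ ^ 2 * (1 + ∑ i : Fin d, ξ i.castSucc ^ 2) ^ r * (1 + ‖ξ‖ ^ 2) ^ s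
      = ‖g ξ‖ * (‖g ξ‖ * ((1 + ∑ i : Fin d, ξ i.castSucc ^ 2) ^ r * (1 + ‖ξ‖ ^ 2) ^ s)) := by
        ring
    _ ≤ ‖g ξ‖ * (‖g ξ‖ * (1 + ‖ξ‖) ^ K) := by
        apply mul_le_mul_of_nonneg_left (mul_le_mul_of_nonneg_left hw (norm_nonneg _))
          (norm_nonneg _)
    _ = (1 + ‖ξ‖) ^ K * ‖g ξ‖ * ‖g ξ‖ := by ring
    _ ≤ C * ‖g ξ‖ := by
        apply mul_le_mul_of_nonneg_right (hC ξ) (norm_nonneg _)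

lemma inv_bound {d : ℕ} (f : SchwartzMap (EuclideanSpace ℝ (Fin (d + 1))) ℂ)
    (x : EuclideanSpace ℝ (Fin (d + 1))) :
    ‖f x‖ ≤ ∫ ξ : EuclideanSpace ℝ (Fin (d + 1)), ‖𝓕 (fun y => f y) ξ‖ := by
  have hg : ⇑(fourierTransformCLM ℝ f) = 𝓕 (fun y => f y) := by
    rw [fourierTransformCLM_apply]; rfl
  have hFi : Integrable (𝓕 (fun y => f y)) := by
    rw [← hg]; exact (fourierTransformCLM ℝ f).integrable
  have hinv := f.continuous.fourierInv_fourier_eq f.integrable hFi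
  have : f x = 𝓕⁻ (𝓕 (fun y => f y)) x := by
    conv_lhs => rw [← hinv]
  rw [this, Real.fourierInv_eq]
  refine (norm_integral_le_integral_norm _).trans ?_
  simp_rw [Circle.norm_smul]
  exact le_refl _

/-- Let `n ≥ 2` (here `n = d + 1` with `d ≥ 1`) and let `s, r ∈ ℝ` with
`s > 1/2` and `s + r > n/2`. Then there is a constant `C > 0` such that every Schwartz function
`f` on `ℝⁿ` satisfies `‖f‖_{L^∞}² ≤ C·∫ |f̂(ξ)|²(1+|ξ'|²)^r(1+|ξ|²)^s dξ`, where
`ξ = (ξ', ξₙ)` and `f̂` is the Fourier transform of `f`. -/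
theorem stmt17 (d : ℕ) (hd : 1 ≤ d) (s r : ℝ) (hs : 1 / 2 < s)
    (hsr : (d + 1 : ℝ) / 2 < s + r) :
    ∃ C : ℝ, 0 < C ∧
      ∀ f : SchwartzMap (EuclideanSpace ℝ (Fin (d + 1))) ℂ,
        ∀ x : EuclideanSpace ℝ (Fin (d + 1)),
          ‖f x‖ ^ 2 ≤ C * ∫ ξ : EuclideanSpace ℝ (Fin (d + 1)),
            ‖𝓕 (fun y => f y) ξ‖ ^ 2
              * (1 + ∑ i : Fin d, ξ i.castSucc ^ 2) ^ r * (1 + ‖ξ‖ ^ 2) ^ s := by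
  have hs0 : (0:ℝ) < s := by linarith
  set W : EuclideanSpace ℝ (Fin (d + 1)) → ℝ := fun ξ =>
    (1 + ∑ i : Fin d, ξ i.castSucc ^ 2) ^ (-r) * (1 + ‖ξ‖ ^ 2) ^ (-s) with hWdef
  set w : EuclideanSpace ℝ (Fin (d + 1)) → ℝ := fun ξ =>
    (1 + ∑ i : Fin d, ξ i.castSucc ^ 2) ^ r * (1 + ‖ξ‖ ^ 2) ^ s with hwdef
  have hSnn : ∀ ξ : EuclideanSpace ℝ (Fin (d+1)), 0 ≤ ∑ i : Fin d, ξ i.castSucc ^ 2 :=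
    fun ξ => Finset.sum_nonneg fun i _ => sq_nonneg _
  have hApos : ∀ ξ : EuclideanSpace ℝ (Fin (d+1)),
      (0:ℝ) < 1 + ∑ i : Fin d, ξ i.castSucc ^ 2 := fun ξ => by have := hSnn ξ; positivity
  have hBpos : ∀ ξ : EuclideanSpace ℝ (Fin (d+1)), (0:ℝ) < 1 + ‖ξ‖ ^ 2 := fun ξ => by positivity
  have hWpos : ∀ ξ, 0 < W ξ := fun ξ => by
    rw [hWdef]
    exact mul_pos (Real.rpow_pos_of_pos (hApos ξ) _) (Real.rpow_pos_of_pos (hBpos ξ) _)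
  have hwpos : ∀ ξ, 0 < w ξ := fun ξ => by
    rw [hwdef]
    exact mul_pos (Real.rpow_pos_of_pos (hApos ξ) _) (Real.rpow_pos_of_pos (hBpos ξ) _)
  have hwW : ∀ ξ, w ξ * W ξ = 1 := by
    intro ξ
    rw [hwdef, hWdef]
    have h1 : (1 + ∑ i : Fin d, ξ i.castSucc ^ 2) ^ r *
        (1 + ∑ i : Fin d, ξ i.castSucc ^ 2) ^ (-r) = 1 := by
      rw [← Real.rpow_add (hApos ξ)]; simp
    have h2 : (1 + ‖ξ‖ ^ 2) ^ s * (1 + ‖ξ‖ ^ 2) ^ (-s) = 1 := by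
      rw [← Real.rpow_add (hBpos ξ)]; simp
    calc (1 + ∑ i : Fin d, ξ i.castSucc ^ 2) ^ r * (1 + ‖ξ‖ ^ 2) ^ s *
          ((1 + ∑ i : Fin d, ξ i.castSucc ^ 2) ^ (-r) * (1 + ‖ξ‖ ^ 2) ^ (-s))
        = ((1 + ∑ i : Fin d, ξ i.castSucc ^ 2) ^ r *
            (1 + ∑ i : Fin d, ξ i.castSucc ^ 2) ^ (-r)) *
          ((1 + ‖ξ‖ ^ 2) ^ s * (1 + ‖ξ‖ ^ 2) ^ (-s)) := by ring
      _ = 1 := by rw [h1, h2, one_mul]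
  have hWint : Integrable W := weight_integrable d hs hsr
  have hwcont : Continuous w := by
    rw [hwdef]
    apply Continuous.mul
    · refine Continuous.rpow_const ?_ (fun ξ => Or.inl (hApos ξ).ne')
      exact continuous_const.add (continuous_finset_sum _ fun i _ => by fun_prop)
    · exact (continuous_const.add (continuous_norm.pow 2)).rpow_const
        (fun ξ => Or.inl (hBpos ξ).ne')
  have hWcont : Continuous W := by
    rw [hWdef]
    apply Continuous.mul
    · refine Continuous.rpow_const ?_ (fun ξ => Or.inl (hApos ξ).ne')
      exact continuous_const.add (continuous_finset_sum _ fun i _ => by fun_prop)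
    · exact (continuous_const.add (continuous_norm.pow 2)).rpow_const
        (fun ξ => Or.inl (hBpos ξ).ne')
  have hT0 : 0 ≤ ∫ ξ, W ξ := integral_nonneg fun ξ => (hWpos ξ).le
  refine ⟨(∫ ξ, W ξ) + 1, by linarith, fun f x => ?_⟩
  set g := fourierTransformCLM ℝ f with hgdef
  have hg : ⇑g = 𝓕 (fun y => f y) := by rw [hgdef, fourierTransformCLM_apply]; rfl
  have hR : Integrable (fun ξ => ‖g ξ‖ ^ 2 *
      (1 + ∑ i : Fin d, ξ i.castSucc ^ 2) ^ r * (1 + ‖ξ‖ ^ 2) ^ s) := rhs_integrable hs0 g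
  have hR0 : 0 ≤ ∫ ξ, ‖g ξ‖ ^ 2 *
      (1 + ∑ i : Fin d, ξ i.castSucc ^ 2) ^ r * (1 + ‖ξ‖ ^ 2) ^ s :=
    integral_nonneg fun ξ => by
      have := hSnn ξ; positivity
  -- Cauchy-Schwarz
  set u : EuclideanSpace ℝ (Fin (d + 1)) → ℝ := fun ξ => ‖g ξ‖ * Real.sqrt (w ξ) with hudef
  set v : EuclideanSpace ℝ (Fin (d + 1)) → ℝ := fun ξ => Real.sqrt (W ξ) with hvdef
  have hucont : Continuous u := g.continuous.norm.mul (Real.continuous_sqrt.comp hwcont)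
  have hvcont : Continuous v := Real.continuous_sqrt.comp hWcont
  have husq : (fun ξ => u ξ ^ (2:ℝ)) = fun ξ => ‖g ξ‖ ^ 2 *
      (1 + ∑ i : Fin d, ξ i.castSucc ^ 2) ^ r * (1 + ‖ξ‖ ^ 2) ^ s := by
    funext ξ
    rw [hudef]
    rw [show ((‖g ξ‖ * Real.sqrt (w ξ)) ^ (2:ℝ)) = (‖g ξ‖ * Real.sqrt (w ξ)) ^ (2:ℕ) from by
      rw [← Real.rpow_natCast (‖g ξ‖ * Real.sqrt (w ξ)) 2]; norm_num]
    rw [mul_pow, Real.sq_sqrt (hwpos ξ).le, hwdef]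
    ring
  have hvsq : (fun ξ => v ξ ^ (2:ℝ)) = W := by
    funext ξ
    rw [hvdef]
    rw [show ((Real.sqrt (W ξ)) ^ (2:ℝ)) = (Real.sqrt (W ξ)) ^ (2:ℕ) from by
      rw [← Real.rpow_natCast _ 2]; norm_num]
    rw [Real.sq_sqrt (hWpos ξ).le]
  have hu2 : MemLp u (ENNReal.ofReal 2) volume := by
    rw [show (ENNReal.ofReal 2) = (2 : ENNReal) from by norm_num]
    refine (memLp_two_iff_integrable_sq hucont.aestronglyMeasurable).2 ?_
    have : (fun ξ => u ξ ^ (2:ℕ)) = fun ξ => u ξ ^ (2:ℝ) := by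
      funext ξ; rw [← Real.rpow_natCast _ 2]; norm_num
    rw [this, husq]
    exact hR
  have hv2 : MemLp v (ENNReal.ofReal 2) volume := by
    rw [show (ENNReal.ofReal 2) = (2 : ENNReal) from by norm_num]
    refine (memLp_two_iff_integrable_sq hvcont.aestronglyMeasurable).2 ?_
    have : (fun ξ => v ξ ^ (2:ℕ)) = fun ξ => v ξ ^ (2:ℝ) := by
      funext ξ; rw [← Real.rpow_natCast _ 2]; norm_num
    rw [this, hvsq]
    exact hWint
  have hpq : Real.HolderConjugate 2 2 := Real.HolderConjugate.two_two
  have hCS := MeasureTheory.integral_mul_le_Lp_mul_Lq_of_nonneg (μ := volume) hpq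
    (Filter.Eventually.of_forall fun ξ => by
      have := Real.sqrt_nonneg (w ξ); have := norm_nonneg (g ξ); positivity)
    (Filter.Eventually.of_forall fun ξ => Real.sqrt_nonneg (W ξ)) hu2 hv2
  have huv : (fun ξ => u ξ * v ξ) = fun ξ => ‖g ξ‖ := by
    funext ξ
    rw [hudef, hvdef, mul_assoc, ← Real.sqrt_mul (hwpos ξ).le, hwW ξ, Real.sqrt_one, mul_one]
  rw [huv] at hCS
  rw [husq, hvsq] at hCS
  -- hCS : ∫ ‖g‖ ≤ R^(1/2) * T^(1/2)
  have key1 : ‖f x‖ ≤ ∫ ξ, ‖g ξ‖ := by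
    have := inv_bound f x
    simp_rw [← hg] at this
    exact this
  set R := ∫ ξ, ‖g ξ‖ ^ 2 *
      (1 + ∑ i : Fin d, ξ i.castSucc ^ 2) ^ r * (1 + ‖ξ‖ ^ 2) ^ s with hRdef
  set T := ∫ ξ, W ξ with hTdef
  have step : ‖f x‖ ^ 2 ≤ (R ^ ((1:ℝ)/2) * T ^ ((1:ℝ)/2)) ^ 2 := by
    have h1 : ‖f x‖ ^ 2 ≤ (∫ ξ, ‖g ξ‖) ^ 2 :=
      pow_le_pow_left₀ (norm_nonneg _) key1 2
    refine h1.trans ?_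
    apply pow_le_pow_left₀ (integral_nonneg fun ξ => norm_nonneg _) hCS
  have hhalf : ∀ y : ℝ, 0 ≤ y → (y ^ ((1:ℝ)/2)) ^ (2:ℕ) = y := fun y hy => by
    rw [← Real.rpow_natCast (y ^ ((1:ℝ)/2)) 2, ← Real.rpow_mul hy]
    norm_num
  have hRT : (R ^ ((1:ℝ)/2) * T ^ ((1:ℝ)/2)) ^ 2 = R * T := by
    rw [mul_pow, hhalf R hR0, hhalf T hT0]
  have hfinal : ‖f x‖ ^ 2 ≤ (T + 1) * R := by
    have := step.trans_eq hRT
    nlinarith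
  simp only [← hg]
  exact hfinal
end
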